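/- arXiv:1008.1617 — 6 statements merged into one kernel-verified Lean document; each statement's English description precedes it below -/
import Mathlib

section
/- Let m be a product of two distinct odd primes p and q, let t be the multiplicative order of 2 modulo m, and let γ be a primitive m-th root of unity in the finite field F_{2^t}. Let s01, s10 ∈ Z_m be the unique residues with s01 ≡ 0 mod p, s01 ≡ 1 mod q, and s10 ≡ 1 mod p, s10 ≡ 0 mod q. Then there is no polynomial f over F_{2^t} with at most two nonzero monomials satisfying f(γ) = f(γ^{s01}) = f(γ^{s10}) = 0 and f(1) = 1. -/
lemma aux_key {F : Type} [Field F] {γ : F} {a b : F} (ha : a ≠ 0) (hb : b ≠ 0)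
    {u v s : ℕ}
    (E1 : a * γ ^ u + b * γ ^ v = 0)
    (Es : a * γ ^ (s * u) + b * γ ^ (s * v) = 0) :
    γ ^ (u + s * v) = γ ^ (v + s * u) := by
  have h : a * b * γ ^ (u + s * v) = a * b * γ ^ (v + s * u) := by
    rw [pow_add, pow_add]
    linear_combination (b * γ ^ (s * v)) * E1 - (b * γ ^ v) * Es
  exact mul_left_cancel₀ (mul_ne_zero ha hb) h

theorem stmt_0 (p q : ℕ) (hp : p.Prime) (hq : q.Prime) (hpo : Odd p) (hqo : Odd q)
    (hpq : p ≠ q) (m : ℕ) (hm : m = p * q)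
    (t : ℕ) (ht : t = orderOf (2 : ZMod m))
    (F : Type) [Field F] [Fintype F] (hF : Fintype.card F = 2 ^ t)
    (γ : F) (hγ : orderOf γ = m)
    (s01 s10 : ℕ) (h01p : s01 % p = 0) (h01q : s01 % q = 1)
    (h10p : s10 % p = 1) (h10q : s10 % q = 0) :
    ¬ ∃ f : Polynomial F, f.support.card ≤ 2 ∧
      f.eval γ = 0 ∧ f.eval (γ ^ s01) = 0 ∧ f.eval (γ ^ s10) = 0 ∧ f.eval 1 = 1 := by
  rintro ⟨f, hcard, hg, h01, h10, h1⟩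
  have hm0 : 0 < m := by
    subst hm; exact Nat.mul_pos hp.pos hq.pos
  have hγ1 : γ ^ m = 1 := by rw [← hγ]; exact pow_orderOf_eq_one γ
  have hγ0 : γ ≠ 0 := by
    intro h
    rw [h, zero_pow hm0.ne'] at hγ1
    exact zero_ne_one hγ1
  obtain hc | hc | hc : f.support.card = 0 ∨ f.support.card = 1 ∨ f.support.card = 2 := by
    omega
  · rw [Finset.card_eq_zero, Polynomial.support_eq_empty] at hc
    rw [hc] at h1
    simp at h1
  · obtain ⟨u, hu⟩ := Finset.card_eq_one.mp hc
    have hf : f = Polynomial.monomial u (f.coeff u) := by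
      conv_lhs => rw [f.as_sum_support]
      rw [hu, Finset.sum_singleton]
    rw [hf] at hg
    rw [Polynomial.eval_monomial] at hg
    have hcu : f.coeff u ≠ 0 := by
      rw [← Polynomial.mem_support_iff, hu]; exact Finset.mem_singleton_self u
    exact (mul_ne_zero hcu (pow_ne_zero u hγ0)) hg
  · obtain ⟨u, v, huv, hs⟩ := Finset.card_eq_two.mp hc
    set a := f.coeff u with hadef
    set b := f.coeff v with hbdef
    have ha : a ≠ 0 := by
      rw [hadef, ← Polynomial.mem_support_iff, hs]; simp
    have hb : b ≠ 0 := by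
      rw [hbdef, ← Polynomial.mem_support_iff, hs]; simp
    have hf : f = Polynomial.monomial u a + Polynomial.monomial v b := by
      conv_lhs => rw [f.as_sum_support]
      rw [hs, Finset.sum_pair huv]
    rw [hf] at hg h01 h10 h1
    simp only [Polynomial.eval_add, Polynomial.eval_monomial, ← pow_mul, one_pow,
      mul_one] at hg h01 h10 h1
    have k01 : γ ^ (u + s01 * v) = γ ^ (v + s01 * u) := aux_key ha hb hg h01
    have k10 : γ ^ (u + s10 * v) = γ ^ (v + s10 * u) := aux_key ha hb hg h10
    set g : Fˣ := Units.mk0 γ hγ0 with hgdef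
    have hgord : orderOf g = m := by
      rw [← hγ, ← orderOf_units]; rfl
    have m01 : u + s01 * v ≡ v + s01 * u [MOD m] := by
      rw [← hgord]
      exact pow_eq_pow_iff_modEq.mp (Units.ext (by simpa [hgdef] using k01))
    have m10 : u + s10 * v ≡ v + s10 * u [MOD m] := by
      rw [← hgord]
      exact pow_eq_pow_iff_modEq.mp (Units.ext (by simpa [hgdef] using k10))
    have hup : u ≡ v [MOD p] := by
      haveI : NeZero p := ⟨hp.pos.ne'⟩
      have h := (ZMod.natCast_eq_natCast_iff _ _ _).mpr (m01.of_dvd ⟨q, hm⟩)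
      push_cast at h
      have hs0 : (s01 : ZMod p) = 0 :=
        (ZMod.natCast_eq_zero_iff _ _).mpr (Nat.dvd_of_mod_eq_zero h01p)
      rw [hs0] at h
      simp at h
      exact (ZMod.natCast_eq_natCast_iff _ _ _).mp h
    have huq : u ≡ v [MOD q] := by
      haveI : NeZero q := ⟨hq.pos.ne'⟩
      have h := (ZMod.natCast_eq_natCast_iff _ _ _).mpr (m10.of_dvd ⟨p, by rw [hm, mul_comm]⟩)
      push_cast at h
      have hs0 : (s10 : ZMod q) = 0 :=
        (ZMod.natCast_eq_zero_iff _ _).mpr (Nat.dvd_of_mod_eq_zero h10q)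
      rw [hs0] at h
      simp at h
      exact (ZMod.natCast_eq_natCast_iff _ _ _).mp h
    have huvm : u ≡ v [MOD m] := by
      rw [hm]
      exact (Nat.modEq_and_modEq_iff_modEq_mul ((Nat.coprime_primes hp hq).mpr hpq)).mp ⟨hup, huq⟩
    have hγuv : γ ^ u = γ ^ v := by
      have h := pow_eq_pow_iff_modEq.mpr (hgord ▸ huvm : u ≡ v [MOD orderOf g])
      have := congrArg Units.val h
      simpa [hgdef] using this
    rw [hγuv, ← add_mul, h1, one_mul] at hg
    exact pow_ne_zero v hγ0 hg
end

section
/- Let m = pq be a product of two distinct odd primes, t = ord_m(2), and γ ∈ F_{2^t}* a primitive m-th root of unity. Define the multiset Z = { (z1 + z2)/(z1·z2 + z2) : z1, z2 ∈ F_{2^t}*, ord(z1) = p, ord(z2) = q }. If Z contains an element with multiplicity greater than one (i.e., there exist (z1,z2) ≠ (z1',z2') with ord(z1)=ord(z1')=p, ord(z2)=ord(z2')=q and (z1+z2)/(z1 z2 + z2) = (z1'+z2')/(z1' z2' + z2')), then there exists a polynomial f over F_{2^t} with exactly three nonzero monomials satisfying f(γ) = f(γ^{s01}) = f(γ^{s10})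 = 0 and f(1) = 1. -/
private lemma pow_mod_helper {F : Type} [Monoid F] (γ : F) (mm : ℕ) (hmm : γ ^ mm = 1)
    {a b : ℕ} (hle : b ≤ a) (hmod : a ≡ b [MOD mm]) : γ ^ a = γ ^ b := by
  obtain ⟨k, hk⟩ := (Nat.modEq_iff_dvd' hle).mp hmod.symm
  have ha : a = b + mm * k := by omega
  rw [ha, pow_add, pow_mul, hmm, one_pow, mul_one]

private lemma crt_pow_helper {F : Type} [Monoid F] (γ : F) (p q s i j : ℕ)
    (hp1 : 1 < p) (hq1 : 1 < q) (hγm : γ ^ (p * q) = 1)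
    (hsp : s % p = 0) (hsq : s % q = 1) :
    (γ ^ s) ^ (q * i + p * j) = γ ^ (p * j) := by
  have hs0 : s ≠ 0 := by
    intro h; rw [h, Nat.zero_mod] at hsq; omega
  have hd : p * q ∣ s * (q * i) := by
    obtain ⟨k, hk⟩ := Nat.dvd_of_mod_eq_zero hsp
    exact ⟨k * i, by rw [hk]; ring⟩
  have hmq : s ≡ 1 [MOD q] := by
    show s % q = 1 % q
    rw [hsq, Nat.mod_eq_of_lt hq1]
  have h2 : s * (p * j) ≡ p * j [MOD p * q] := by
    have h := (Nat.ModEq.mul_left' (c := p) hmq).mul_right j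
    have e1 : s * (p * j) = p * s * j := by ring
    have e2 : p * j = p * 1 * j := by ring
    rw [e1, e2]; exact h
  have hmod : s * (q * i + p * j) ≡ p * j [MOD p * q] := by
    have h0 : s * (q * i) ≡ 0 [MOD p * q] := Nat.modEq_zero_iff_dvd.mpr hd
    have h3 := h0.add h2
    rw [Nat.zero_add] at h3
    have e3 : s * (q * i + p * j) = s * (q * i) + s * (p * j) := by ring
    rw [e3]; exact h3
  have hble : p * j ≤ s * (q * i + p * j) :=
    calc p * j ≤ q * i + p * j := Nat.le_add_left _ _
      _ = 1 * (q * i + p * j) := (one_mul _).symm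
      _ ≤ s * (q * i + p * j) := Nat.mul_le_mul_right _ (by omega)
  rw [← pow_mul]
  exact pow_mod_helper γ (p * q) hγm hble hmod

private lemma trin_exists {F : Type} [Field F] (u v w : F) (a b c : F) (e1 e2 : ℕ)
    (h1 : e1 ≠ 0) (h2 : e2 ≠ 0) (h12 : e1 ≠ e2) (ha : a ≠ 0) (hb : b ≠ 0) (hc : c ≠ 0)
    (hu : c + a * u ^ e1 + b * u ^ e2 = 0) (hv : c + a * v ^ e1 + b * v ^ e2 = 0)
    (hw : c + a * w ^ e1 + b * w ^ e2 = 0) (hsum : c + a + b = 1) :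
    ∃ f : Polynomial F, f.support.card = 3 ∧
      f.eval u = 0 ∧ f.eval v = 0 ∧ f.eval w = 0 ∧ f.eval 1 = 1 := by
  refine ⟨Polynomial.C c * Polynomial.X ^ 0 + Polynomial.C a * Polynomial.X ^ e1 +
      Polynomial.C b * Polynomial.X ^ e2, ?_, ?_, ?_, ?_, ?_⟩
  · rcases lt_or_gt_of_ne h12 with h | h
    · exact Polynomial.card_support_trinomial (Nat.pos_of_ne_zero h1) h hc ha hb
    · rw [add_right_comm]
      exact Polynomial.card_support_trinomial (Nat.pos_of_ne_zero h2) h hc hb ha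
  · simp only [Polynomial.eval_add, Polynomial.eval_mul, Polynomial.eval_pow,
      Polynomial.eval_C, Polynomial.eval_X, pow_zero, mul_one]
    linear_combination hu
  · simp only [Polynomial.eval_add, Polynomial.eval_mul, Polynomial.eval_pow,
      Polynomial.eval_C, Polynomial.eval_X, pow_zero, mul_one]
    linear_combination hv
  · simp only [Polynomial.eval_add, Polynomial.eval_mul, Polynomial.eval_pow,
      Polynomial.eval_C, Polynomial.eval_X, pow_zero, mul_one]
    linear_combination hw
  · simp only [Polynomial.eval_add, Polynomial.eval_mul, Polynomial.eval_pow,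
      Polynomial.eval_C, Polynomial.eval_X, pow_zero, mul_one, one_pow]
    linear_combination hsum

theorem stmt_6 (p q : ℕ) (hp : p.Prime) (hq : q.Prime) (hpo : Odd p) (hqo : Odd q)
    (hpq : p ≠ q) (m : ℕ) (hm : m = p * q)
    (t : ℕ) (ht : t = orderOf (2 : ZMod m))
    (F : Type) [Field F] [Fintype F] (hF : Fintype.card F = 2 ^ t)
    (γ : F) (hγ : orderOf γ = m)
    (s01 s10 : ℕ) (h01p : s01 % p = 0) (h01q : s01 % q = 1)
    (h10p : s10 % p = 1) (h10q : s10 % q = 0)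
    (hcoll : ∃ z1 z2 z1' z2' : F,
      orderOf z1 = p ∧ orderOf z1' = p ∧ orderOf z2 = q ∧ orderOf z2' = q ∧
      (z1, z2) ≠ (z1', z2') ∧
      (z1 + z2) / (z1 * z2 + z2) = (z1' + z2') / (z1' * z2' + z2')) :
    ∃ f : Polynomial F, f.support.card = 3 ∧
      f.eval γ = 0 ∧ f.eval (γ ^ s01) = 0 ∧ f.eval (γ ^ s10) = 0 ∧ f.eval 1 = 1 := by
  obtain ⟨z1, z2, z1', z2', hz1, hz1', hz2, hz2', hne, hfrac⟩ := hcoll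
  -- characteristic 2
  have hch : (2 : F) = 0 := by
    obtain ⟨n, hrp, hcard⟩ := FiniteField.card F (ringChar F)
    have hdvd : ringChar F ∣ 2 ^ t := by
      rw [← hF, hcard]
      exact dvd_pow_self _ n.ne_zero
    have hr2 : ringChar F = 2 :=
      (Nat.prime_dvd_prime_iff_eq hrp Nat.prime_two).mp (hrp.dvd_of_dvd_pow hdvd)
    haveI : CharP F 2 := by rw [← hr2]; exact ringChar.charP F
    exact_mod_cast CharP.cast_eq_zero F 2
  have hp1 : 1 < p := hp.one_lt
  have hq1 : 1 < q := hq.one_lt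
  -- basic nonvanishing facts
  have hz1p : z1 ^ p = 1 := by rw [← hz1]; exact pow_orderOf_eq_one z1
  have hz1'p : z1' ^ p = 1 := by rw [← hz1']; exact pow_orderOf_eq_one z1'
  have hz2q : z2 ^ q = 1 := by rw [← hz2]; exact pow_orderOf_eq_one z2
  have hz2'q : z2' ^ q = 1 := by rw [← hz2']; exact pow_orderOf_eq_one z2'
  have hz1ne : z1 ≠ 0 := by
    intro h; rw [h, zero_pow (by omega)] at hz1p; exact zero_ne_one hz1p
  have hz2ne : z2 ≠ 0 := by
    intro h; rw [h, zero_pow (by omega)] at hz2q; exact zero_ne_one hz2q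
  have hz1'ne : z1' ≠ 0 := by
    intro h; rw [h, zero_pow (by omega)] at hz1'p; exact zero_ne_one hz1'p
  have hz2'ne : z2' ≠ 0 := by
    intro h; rw [h, zero_pow (by omega)] at hz2'q; exact zero_ne_one hz2'q
  have h1z1 : 1 + z1 ≠ 0 := by
    intro h
    have : z1 = 1 := by linear_combination h - hch
    rw [this, orderOf_one] at hz1; omega
  have h1z2 : 1 + z2 ≠ 0 := by
    intro h
    have : z2 = 1 := by linear_combination h - hch
    rw [this, orderOf_one] at hz2; omega
  have h1z1' : 1 + z1' ≠ 0 := by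
    intro h
    have : z1' = 1 := by linear_combination h - hch
    rw [this, orderOf_one] at hz1'; omega
  have h1z2' : 1 + z2' ≠ 0 := by
    intro h
    have : z2' = 1 := by linear_combination h - hch
    rw [this, orderOf_one] at hz2'; omega
  have hA : z1' + z2' ≠ 0 := by
    intro h
    have : z1' = z2' := by linear_combination h - z2' * hch
    rw [this, hz2'] at hz1'; exact hpq hz1'.symm
  have hB : z1 + z2 ≠ 0 := by
    intro h
    have : z1 = z2 := by linear_combination h - z2 * hch
    rw [this, hz2] at hz1; exact hpq hz1.symm
  -- the cross-multiplied collision equation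
  have hden1 : z1 * z2 + z2 ≠ 0 := by
    intro h
    have h' : z2 * (1 + z1) = 0 := by linear_combination h
    rcases mul_eq_zero.mp h' with h'' | h''
    · exact hz2ne h''
    · exact h1z1 h''
  have hden2 : z1' * z2' + z2' ≠ 0 := by
    intro h
    have h' : z2' * (1 + z1') = 0 := by linear_combination h
    rcases mul_eq_zero.mp h' with h'' | h''
    · exact hz2'ne h''
    · exact h1z1' h''
  have hcol : (z1 + z2) * (z1' * z2' + z2') = (z1' + z2') * (z1 * z2 + z2) :=
    (div_eq_div_iff hden1 hden2).mp hfrac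
  -- C ≠ 0
  have hC : z1' * z2 + z1 * z2' ≠ 0 := by
    intro hC0
    have heq : z1' * z2 = z1 * z2' := by linear_combination hC0 - z1 * z2' * hch
    set d := z1' * z1⁻¹ with hd
    have hdp : d ^ p = 1 := by
      rw [hd, mul_pow, inv_pow, hz1'p, hz1p, inv_one, mul_one]
    have hd2 : d = z2' * z2⁻¹ := by
      rw [hd]; field_simp; linear_combination heq
    have hdq : d ^ q = 1 := by
      rw [hd2, mul_pow, inv_pow, hz2'q, hz2q, inv_one, mul_one]
    have hdvd : orderOf d ∣ Nat.gcd p q :=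
      Nat.dvd_gcd (orderOf_dvd_of_pow_eq_one hdp) (orderOf_dvd_of_pow_eq_one hdq)
    have hcop : Nat.gcd p q = 1 := (Nat.coprime_primes hp hq).mpr hpq
    rw [hcop, Nat.dvd_one, orderOf_eq_one_iff] at hdvd
    have hz1eq : z1' = z1 := by
      have h' : z1' * z1⁻¹ * z1 = 1 * z1 := by rw [← hd, hdvd]
      rwa [inv_mul_cancel_right₀ hz1ne, one_mul] at h'
    have hz2eq : z2' = z2 := by
      have h' : z1 * z2' = z1 * z2 := by rw [← heq, hz1eq]
      exact mul_left_cancel₀ hz1ne h'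
    exact hne (by rw [hz1eq, hz2eq])
  -- S ≠ 0
  have hS : (z1' + z2') + (z1 + z2) + (z1' * z2 + z1 * z2') ≠ 0 := by
    intro hS0
    have hswap : (1 + z1) * (1 + z2') = (1 + z2) * (1 + z1') := by
      linear_combination -hS0 + (z1 + z2' + z1 * z2') * hch
    set r := (1 + z1') * (1 + z1)⁻¹ with hr
    have hr0 : r ≠ 0 := mul_ne_zero h1z1' (inv_ne_zero h1z1)
    have hru : r * (1 + z1) = 1 + z1' := by rw [hr]; field_simp
    have hrv : r * (1 + z2) = 1 + z2' := by
      rw [hr]; field_simp; linear_combination -hswap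
    have e1 : z1' = r * (1 + z1) - 1 := by linear_combination -hru
    have e2 : z2' = r * (1 + z2) - 1 := by linear_combination -hrv
    have hcol2 := hcol
    rw [e1, e2] at hcol2
    have key : (r - 1) * (r * ((1 + z1) * ((1 + z2) * (z1 + z2)))) = 0 := by
      linear_combination hcol2 - (z2 * (1 + z1) * (1 - r)) * hch
    rcases mul_eq_zero.mp key with h | h
    · have hr1 : r = 1 := by linear_combination h
      have hz1eq : z1' = z1 := by linear_combination e1 + (1 + z1) * hr1
      have hz2eq : z2' = z2 := by linear_combination e2 + (1 + z2) * hr1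
      exact hne (by rw [hz1eq, hz2eq])
    · exact (mul_ne_zero hr0 (mul_ne_zero h1z1 (mul_ne_zero h1z2 hB))) h
  -- the three evaluation identities
  have E1 : (z1' + z2') * (z1 * z2) + (z1 + z2) * (z1' * z2') + (z1' * z2 + z1 * z2') = 0 := by
    linear_combination hcol + (z1 * z2 * z1' + z1 * z2 * z2' + z2 * z1') * hch
  have E2 : (z1' + z2') * z2 + (z1 + z2) * z2' + (z1' * z2 + z1 * z2') = 0 := by
    linear_combination (z2 * z1' + z2 * z2' + z1 * z2') * hch
  have E3 : (z1' + z2') * z1 + (z1 + z2) * z1' + (z1' * z2 + z1 * z2') = 0 := by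
    linear_combination (z1 * z1' + z1 * z2' + z2 * z1') * hch
  -- express z's as powers of γ
  have hγm : γ ^ (p * q) = 1 := by rw [← hm, ← hγ]; exact pow_orderOf_eq_one γ
  have hγqp : γ ^ (q * p) = 1 := by rw [mul_comm]; exact hγm
  have horderq : orderOf (γ ^ q) = p := by
    rw [orderOf_pow' γ (by omega : q ≠ 0), hγ, hm,
      Nat.gcd_eq_right (dvd_mul_left q p), Nat.mul_div_cancel _ (by omega : 0 < q)]
  have horderp : orderOf (γ ^ p) = q := by
    rw [orderOf_pow' γ (by omega : p ≠ 0), hγ, hm, mul_comm p q,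
      Nat.gcd_eq_right (dvd_mul_left p q), Nat.mul_div_cancel _ (by omega : 0 < p)]
  haveI : NeZero p := ⟨by omega⟩
  haveI : NeZero q := ⟨by omega⟩
  have primp : IsPrimitiveRoot (γ ^ q) p := horderq ▸ IsPrimitiveRoot.orderOf (γ ^ q)
  have primq : IsPrimitiveRoot (γ ^ p) q := horderp ▸ IsPrimitiveRoot.orderOf (γ ^ p)
  obtain ⟨i, hip, hi⟩ := primp.eq_pow_of_pow_eq_one hz1p
  obtain ⟨i', hip', hi'⟩ := primp.eq_pow_of_pow_eq_one hz1'p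
  obtain ⟨j, hjq, hj⟩ := primq.eq_pow_of_pow_eq_one hz2q
  obtain ⟨j', hjq', hj'⟩ := primq.eq_pow_of_pow_eq_one hz2'q
  have hz1e : γ ^ (q * i) = z1 := by rw [pow_mul]; exact hi
  have hz1'e : γ ^ (q * i') = z1' := by rw [pow_mul]; exact hi'
  have hz2e : γ ^ (p * j) = z2 := by rw [pow_mul]; exact hj
  have hz2'e : γ ^ (p * j') = z2' := by rw [pow_mul]; exact hj'
  -- the two exponents
  have hge : γ ^ (q * i + p * j) = z1 * z2 := by rw [pow_add, hz1e, hz2e]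
  have hge' : γ ^ (q * i' + p * j') = z1' * z2' := by rw [pow_add, hz1'e, hz2'e]
  have hbe : (γ ^ s01) ^ (q * i + p * j) = z2 := by
    have h := crt_pow_helper γ p q s01 i j hp1 hq1 hγm h01p h01q
    rwa [hz2e] at h
  have hbe' : (γ ^ s01) ^ (q * i' + p * j') = z2' := by
    have h := crt_pow_helper γ p q s01 i' j' hp1 hq1 hγm h01p h01q
    rwa [hz2'e] at h
  have hde : (γ ^ s10) ^ (q * i + p * j) = z1 := by
    have h := crt_pow_helper γ q p s10 j i hq1 hp1 hγqp h10q h10p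
    rwa [Nat.add_comm (p * j) (q * i), hz1e] at h
  have hde' : (γ ^ s10) ^ (q * i' + p * j') = z1' := by
    have h := crt_pow_helper γ q p s10 j' i' hq1 hp1 hγqp h10q h10p
    rwa [Nat.add_comm (p * j') (q * i'), hz1'e] at h
  -- exponents are nonzero and distinct
  have he0 : q * i + p * j ≠ 0 := by
    intro h
    have hqi : q * i = 0 := by omega
    have hi0 : i = 0 := by
      rcases Nat.mul_eq_zero.mp hqi with h' | h'
      · omega
      · exact h'
    have : z1 = 1 := by rw [← hz1e, hi0, Nat.mul_zero, pow_zero]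
    rw [this, orderOf_one] at hz1; omega
  have he0' : q * i' + p * j' ≠ 0 := by
    intro h
    have hqi : q * i' = 0 := by omega
    have hi0 : i' = 0 := by
      rcases Nat.mul_eq_zero.mp hqi with h' | h'
      · omega
      · exact h'
    have : z1' = 1 := by rw [← hz1'e, hi0, Nat.mul_zero, pow_zero]
    rw [this, orderOf_one] at hz1'; omega
  have hee : q * i + p * j ≠ q * i' + p * j' := by
    intro h
    have h1 : z1 = z1' := by rw [← hde, ← hde', h]
    have h2 : z2 = z2' := by rw [← hbe, ← hbe', h]
    exact hne (by rw [h1, h2])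
  -- assemble the trinomial
  set S := (z1' + z2') + (z1 + z2) + (z1' * z2 + z1 * z2') with hSdef
  have ha : S⁻¹ * (z1' + z2') ≠ 0 := mul_ne_zero (inv_ne_zero hS) hA
  have hb : S⁻¹ * (z1 + z2) ≠ 0 := mul_ne_zero (inv_ne_zero hS) hB
  have hc : S⁻¹ * (z1' * z2 + z1 * z2') ≠ 0 := mul_ne_zero (inv_ne_zero hS) hC
  have hinv : S⁻¹ * S = 1 := inv_mul_cancel₀ hS
  refine trin_exists γ (γ ^ s01) (γ ^ s10) (S⁻¹ * (z1' + z2')) (S⁻¹ * (z1 + z2))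
    (S⁻¹ * (z1' * z2 + z1 * z2')) (q * i + p * j) (q * i' + p * j')
    he0 he0' hee ha hb hc ?_ ?_ ?_ ?_
  · rw [hge, hge']
    linear_combination S⁻¹ * E1
  · rw [hbe, hbe']
    linear_combination S⁻¹ * E2
  · rw [hde, hde']
    linear_combination S⁻¹ * E3
  · rw [hSdef] at hinv
    linear_combination hinv
end

section
/- Let p be an odd prime, θ ∈ C a primitive p-th root of unity, and a : {1, …, p−1} → Z/pZ a map such that ∑_{i=1}^{p−1} θ^{a(i)} + 1 = 0. Then a is a bijection from {1, …, p−1} onto (Z/pZ) \ {0}. -/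
open Polynomial Finset

theorem stmt_10 (p : ℕ) (hp : p.Prime) (hpo : Odd p)
    (θ : ℂ) (hθ : IsPrimitiveRoot θ p)
    (a : ℕ → ZMod p)
    (hsum : (∑ i ∈ Finset.Icc 1 (p - 1), θ ^ (a i).val) + 1 = 0) :
    Set.BijOn a (Set.Icc 1 (p - 1)) {x : ZMod p | x ≠ 0} := by
  classical
  haveI : Fact p.Prime := ⟨hp⟩
  have hp0 : 0 < p := hp.pos
  set s := Finset.Icc 1 (p - 1) with hs
  set m : ℕ → ℕ := fun k => (s.filter (fun i => (a i).val = k)).card with hm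
  have hmap : ∀ i ∈ s, (a i).val ∈ Finset.range p :=
    fun i _ => Finset.mem_range.2 ((a i).val_lt)
  have hsum2 : ∑ i ∈ s, θ ^ (a i).val = ∑ k ∈ Finset.range p, (m k : ℂ) * θ ^ k := by
    rw [← Finset.sum_fiberwise_of_maps_to hmap]
    refine Finset.sum_congr rfl fun k _ => ?_
    rw [Finset.sum_congr rfl (fun i hi => by rw [(Finset.mem_filter.1 hi).2]),
      Finset.sum_const, nsmul_eq_mul]
  set c : ℕ → ℚ := fun k => (m k : ℚ) + if k = 0 then 1 else 0 with hc
  set P : ℚ[X] := ∑ k ∈ Finset.range p, C (c k) * X ^ k with hP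
  have hcoeff : ∀ j, P.coeff j = if j ∈ Finset.range p then c j else 0 := by
    intro j
    simp only [hP, finset_sum_coeff, coeff_C_mul, coeff_X_pow, mul_ite, mul_one, mul_zero]
    rw [Finset.sum_ite_eq (Finset.range p) j c]
  have hPθ : aeval θ P = 0 := by
    have h1 : (aeval θ) P = ∑ k ∈ Finset.range p, (c k : ℂ) * θ ^ k := by
      simp [hP]
    have h2 : ∀ k ∈ Finset.range p, (c k : ℂ) * θ ^ k
        = (m k : ℂ) * θ ^ k + (if k = 0 then (1:ℂ) else 0) * θ ^ k := by
      intro k _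
      simp only [hc]
      push_cast [apply_ite (fun q : ℚ => (q : ℂ))]
      ring
    rw [h1, Finset.sum_congr rfl h2, Finset.sum_add_distrib, ← hsum2]
    have h0 : ∑ k ∈ Finset.range p, (if k = 0 then (1:ℂ) else 0) * θ ^ k = 1 := by
      simp only [ite_mul, one_mul, zero_mul]
      rw [Finset.sum_ite_eq' (Finset.range p) 0 (fun k => θ ^ k)]
      simp [hp0]
    rw [h0, hsum]
  have hmin : Polynomial.cyclotomic p ℚ ∣ P := by
    rw [Polynomial.cyclotomic_eq_minpoly_rat hθ hp0]
    exact minpoly.dvd ℚ θ hPθ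
  obtain ⟨q, hq⟩ := hmin
  have hPne : P ≠ 0 := by
    intro h
    have h0 := hcoeff 0
    rw [h, Polynomial.coeff_zero, if_pos (Finset.mem_range.2 hp0)] at h0
    simp only [hc, if_pos rfl] at h0
    exact Nat.cast_add_one_ne_zero (m 0) h0.symm
  have hqne : q ≠ 0 := by rintro rfl; rw [mul_zero] at hq; exact hPne hq
  have hdegP : P.natDegree ≤ p - 1 := by
    refine natDegree_sum_le_of_forall_le _ _ fun k hk => ?_
    refine le_trans (natDegree_C_mul_le _ _) ?_
    simpa [natDegree_X_pow] using Nat.le_pred_of_lt (Finset.mem_range.1 hk)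
  have hdegq : q.natDegree = 0 := by
    have hcyc : (Polynomial.cyclotomic p ℚ).natDegree = p - 1 := by
      rw [natDegree_cyclotomic, Nat.totient_prime hp]
    have hmul := natDegree_mul (Polynomial.cyclotomic_ne_zero p ℚ) hqne
    rw [← hq, hcyc] at hmul
    omega
  obtain ⟨r, rfl⟩ : ∃ r, q = C r :=
    ⟨q.coeff 0, Polynomial.eq_C_of_natDegree_eq_zero hdegq⟩
  have hck : ∀ k ∈ Finset.range p, c k = r := by
    intro k hk
    have h1 := hcoeff k
    rw [hq, Polynomial.cyclotomic_prime ℚ p, coeff_mul_C, finset_sum_coeff] at h1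
    simp only [coeff_X_pow] at h1
    rw [Finset.sum_ite_eq (Finset.range p) k (fun _ => (1:ℚ)), if_pos hk, if_pos hk,
      one_mul] at h1
    exact h1.symm
  have hcards : ∑ k ∈ Finset.range p, m k = p - 1 := by
    rw [hm, ← Finset.card_eq_sum_card_fiberwise hmap, hs, Nat.card_Icc]
    omega
  have hr : r = 1 := by
    have h1 : ∑ k ∈ Finset.range p, c k = (p : ℚ) * r := by
      rw [Finset.sum_congr rfl hck, Finset.sum_const, Finset.card_range, nsmul_eq_mul]
    have h2 : ∑ k ∈ Finset.range p, c k = (p : ℚ) := by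
      simp only [hc, Finset.sum_add_distrib]
      rw [← Nat.cast_sum, hcards, Finset.sum_ite_eq' (Finset.range p) 0 (fun _ => (1:ℚ)),
        if_pos (Finset.mem_range.2 hp0)]
      have hcsub : ((p - 1 : ℕ) : ℚ) = (p : ℚ) - 1 := by
        push_cast [Nat.cast_sub (by omega : 1 ≤ p)]; ring
      rw [hcsub]; ring
    have hpne : (p : ℚ) ≠ 0 := Nat.cast_ne_zero.2 hp0.ne'
    have := h1.symm.trans h2
    field_simp at this
    exact mul_left_cancel₀ hpne (by rw [this, mul_one])
  -- now extract the multiplicities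
  have hm0 : m 0 = 0 := by
    have := hck 0 (Finset.mem_range.2 hp0)
    rw [hr, hc] at this
    simp at this
    exact_mod_cast this
  have hm1 : ∀ k, k ≠ 0 → k < p → m k = 1 := by
    intro k hk0 hkp
    have := hck k (Finset.mem_range.2 hkp)
    rw [hr, hc] at this
    simp [hk0] at this
    exact_mod_cast this
  have hsfin : ∀ i, i ∈ Set.Icc 1 (p - 1) ↔ i ∈ s := by
    intro i; rw [hs, Set.mem_Icc, Finset.mem_Icc]
  have hmapsTo : Set.MapsTo a (Set.Icc 1 (p - 1)) {x : ZMod p | x ≠ 0} := by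
    intro i hi
    simp only [Set.mem_setOf_eq]
    intro h0
    have hifilter : i ∈ s.filter (fun i => (a i).val = 0) := by
      rw [Finset.mem_filter]
      exact ⟨(hsfin i).1 hi, by rw [h0]; simp⟩
    have : 0 < m 0 := Finset.card_pos.2 ⟨i, hifilter⟩
    omega
  refine ⟨hmapsTo, ?_, ?_⟩
  · intro i hi j hj hij
    have hk0 : (a i) ≠ 0 := hmapsTo hi
    have hkv : (a i).val ≠ 0 := by
      intro h; exact hk0 ((ZMod.val_eq_zero _).1 h)
    have hcard : m ((a i).val) ≤ 1 := le_of_eq (hm1 _ hkv (a i).val_lt)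
    have hif : i ∈ s.filter (fun t => (a t).val = (a i).val) :=
      Finset.mem_filter.2 ⟨(hsfin i).1 hi, rfl⟩
    have hjf : j ∈ s.filter (fun t => (a t).val = (a i).val) :=
      Finset.mem_filter.2 ⟨(hsfin j).1 hj, by rw [hij]⟩
    exact Finset.card_le_one.1 hcard i hif j hjf
  · intro x hx
    have hxv : x.val ≠ 0 := by
      intro h; exact hx ((ZMod.val_eq_zero _).1 h)
    have : 0 < m x.val := by rw [hm1 _ hxv x.val_lt]; omega
    obtain ⟨i, hi⟩ := Finset.card_pos.1 this
    rw [Finset.mem_filter] at hi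
    exact ⟨i, (hsfin i).2 hi.1, ZMod.val_injective p hi.2⟩
end

section
/- Let F_{2^4} = F_2[γ]/(γ^4 + γ + 1), so γ is a primitive 15th root of unity. Then there is no polynomial f over F_{2^4} with exactly three nonzero monomials such that f(γ) = f(γ^6) = f(γ^{10}) = 0 and f(1) = 1. -/
set_option maxHeartbeats 4000000

def pwN (e : ℕ) : ℕ := [1,2,4,8,3,6,12,11,5,10,7,14,15,13,9].getD (e % 15) 0

theorem pwN_core : ∀ q r m n : Fin 15,
    ¬ ((1 ^^^ pwN (q.1 + (1*m.1)%15) ^^^ pwN (r.1 + (1*n.1)%15) = 0) ∧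
       (1 ^^^ pwN (q.1 + (6*m.1)%15) ^^^ pwN (r.1 + (6*n.1)%15) = 0) ∧
       (1 ^^^ pwN (q.1 + (10*m.1)%15) ^^^ pwN (r.1 + (10*n.1)%15) = 0) ∧
       ¬ (1 ^^^ pwN q.1 ^^^ pwN r.1 = 0)) := by decide

theorem pwN_lt (e : ℕ) : pwN e < 16 := by
  unfold pwN
  have h : e % 15 < 15 := Nat.mod_lt _ (by norm_num)
  set t := e % 15 with ht
  interval_cases t <;> norm_num

def phi {F : Type} [Field F] (γ : F) (t : ℕ) : F :=
  (if t / 2^0 % 2 = 1 then 1 else 0) + (if t / 2^1 % 2 = 1 then γ else 0) +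
    (if t / 2^2 % 2 = 1 then γ^2 else 0) + (if t / 2^3 % 2 = 1 then γ^3 else 0)

theorem cond_xor {F : Type} [Field F] (a b : Bool) (c : F) (h : c + c = 0) :
    cond (a ^^ b) c 0 = cond a c 0 + cond b c 0 := by
  cases a <;> cases b <;> simp_all

theorem if_eq_cond {F : Type} [Field F] (t i : ℕ) (c : F) :
    (if t / 2^i % 2 = 1 then c else 0) = cond (t.testBit i) c 0 := by
  rw [Nat.testBit_eq_decide_div_mod_eq]
  by_cases h : t / 2^i % 2 = 1 <;> simp [h]

theorem phi_xor {F : Type} [Field F] (γ : F) (h2 : (2:F) = 0) (s t : ℕ) :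
    phi γ (s ^^^ t) = phi γ s + phi γ t := by
  have hc : ∀ c : F, c + c = 0 := fun c => by linear_combination c * h2
  simp only [phi, if_eq_cond, Nat.testBit_xor]
  rw [cond_xor _ _ _ (hc 1), cond_xor _ _ _ (hc γ), cond_xor _ _ _ (hc (γ^2)),
    cond_xor _ _ _ (hc (γ^3))]
  ring

theorem phi_pw {F : Type} [Field F] (γ : F) (h2 : (2:F) = 0)
    (hpoly : γ ^ 4 + γ + 1 = 0) : ∀ e < 15, γ ^ e = phi γ (pwN e) := by
  intro e he
  interval_cases e <;> norm_num [phi, pwN]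
  · linear_combination (1:F) * hpoly + ((- 1:F) - (1)*γ) * h2
  · linear_combination (γ) * hpoly + ((- 1)*γ - (1)*γ^2) * h2
  · linear_combination (γ^2) * hpoly + ((- 1)*γ^2 - (1)*γ^3) * h2
  · linear_combination ((- 1:F) + γ^3) * hpoly + ((- 1)*γ^3) * h2
  · linear_combination ((- 1:F) - (1)*γ + γ^4) * hpoly + (γ) * h2
  · linear_combination ((- 1)*γ - (1)*γ^2 + γ^5) * hpoly + (γ^2) * h2
  · linear_combination (1 - (1)*γ^2 - (1)*γ^3 + γ^6) * hpoly + ((- 1:F) - (1)*γ + γ^3) * h2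
  · linear_combination (2 + γ - (1)*γ^3 - (1)*γ^4 + γ^7) * hpoly + ((- 1:F) - (2)*γ - (1)*γ^2) * h2
  · linear_combination (1 + (2)*γ + γ^2 - (1)*γ^4 - (1)*γ^5 + γ^8) * hpoly + ((- 1:F) - (2)*γ - (2)*γ^2 - (1)*γ^3) * h2
  · linear_combination ((- 1:F) + γ + (2)*γ^2 + γ^3 - (1)*γ^5 - (1)*γ^6 + γ^9) * hpoly + ((- 2)*γ^2 - (2)*γ^3) * h2
  · linear_combination ((- 3:F) - (1)*γ + γ^2 + (2)*γ^3 + γ^4 - (1)*γ^6 - (1)*γ^7 + γ^10) * hpoly + (1 + (2)*γ - (2)*γ^3) * h2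

theorem phi_eq_zero {F : Type} [Field F] (γ : F) (h2 : (2:F) = 0)
    (hpoly : γ ^ 4 + γ + 1 = 0) : ∀ v < 16, phi γ v = 0 → v = 0 := by
  intro v hv h
  interval_cases v
  · rfl
  all_goals (exfalso; norm_num [phi] at h)
  · exact one_ne_zero (α := F) (by linear_combination ((1:F) + (1)*γ^3) * h + ((1:F)) * hpoly + ((-1)*γ + (-1)*γ^4) * h2)
  · exact one_ne_zero (α := F) (by linear_combination ((1)*γ + (1)*γ^2 + (1)*γ^3) * h + ((1:F)) * hpoly + ((-1)*γ + (-1)*γ^2 + (-1)*γ^3 + (-1)*γ^4) * h2)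
  · exact one_ne_zero (α := F) (by linear_combination ((1:F) + (1)*γ^3) * h + ((1:F)) * hpoly + ((-1)*γ + (-1)*γ^4) * h2)
  · exact one_ne_zero (α := F) (by linear_combination ((1:F) + (1)*γ + (1)*γ^3) * h + ((1)*γ) * hpoly + ((-1)*γ + (-1)*γ^2 + (-1)*γ^3 + (-1)*γ^5) * h2)
  · exact one_ne_zero (α := F) (by linear_combination ((1:F) + (1)*γ + (1)*γ^2) * h + ((1:F)) * hpoly + ((-1)*γ + (-1)*γ^2 + (-1)*γ^3 + (-1)*γ^4) * h2)
  · exact one_ne_zero (α := F) (by linear_combination ((1)*γ + (1)*γ^2) * h + ((1:F)) * hpoly + ((-1)*γ + (-1)*γ^2 + (-1)*γ^3 + (-1)*γ^4) * h2)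
  · exact one_ne_zero (α := F) (by linear_combination ((1:F) + (1)*γ^3) * h + ((1:F)) * hpoly + ((-1)*γ + (-1)*γ^4) * h2)
  · exact one_ne_zero (α := F) (by linear_combination ((1)*γ) * h + ((1:F)) * hpoly + ((-1)*γ + (-1)*γ^4) * h2)
  · exact one_ne_zero (α := F) (by linear_combination ((1)*γ^2 + (1)*γ^3) * h + ((1:F) + (1)*γ + (1)*γ^2) * hpoly + ((-1)*γ + (-1)*γ^2 + (-1)*γ^3 + (-1)*γ^4 + (-1)*γ^5 + (-1)*γ^6) * h2)
  · exact one_ne_zero (α := F) (by linear_combination ((1:F) + (1)*γ^2) * h + ((1)*γ) * hpoly + ((-1)*γ + (-1)*γ^2 + (-1)*γ^3 + (-1)*γ^5) * h2)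
  · exact one_ne_zero (α := F) (by linear_combination ((1)*γ + (1)*γ^3) * h + ((1:F) + (1)*γ + (1)*γ^2) * hpoly + ((-1)*γ + (-1)*γ^2 + (-1)*γ^3 + (-1)*γ^4 + (-1)*γ^5 + (-1)*γ^6) * h2)
  · exact one_ne_zero (α := F) (by linear_combination ((1)*γ^2) * h + ((1:F) + (1)*γ) * hpoly + ((-1)*γ + (-1)*γ^2 + (-1)*γ^4 + (-1)*γ^5) * h2)
  · exact one_ne_zero (α := F) (by linear_combination ((1:F) + (1)*γ) * h + ((1:F)) * hpoly + ((-1)*γ + (-1)*γ^2 + (-1)*γ^3 + (-1)*γ^4) * h2)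
  · exact one_ne_zero (α := F) (by linear_combination ((1)*γ^3) * h + ((1:F) + (1)*γ + (1)*γ^2) * hpoly + ((-1)*γ + (-1)*γ^2 + (-1)*γ^3 + (-1)*γ^4 + (-1)*γ^5 + (-1)*γ^6) * h2)
theorem stmt_14 (F : Type) [Field F] [Fintype F] (hF : Fintype.card F = 2 ^ 4)
    (γ : F) (hpoly : γ ^ 4 + γ + 1 = 0) (hγ : orderOf γ = 15) :
    ¬ ∃ f : Polynomial F, f.support.card = 3 ∧
      f.eval γ = 0 ∧ f.eval (γ ^ 6) = 0 ∧ f.eval (γ ^ 10) = 0 ∧ f.eval 1 = 1 := by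
  classical
  rintro ⟨f, hcard, hev1, hev6, hev10, hone⟩
  -- characteristic 2
  have h16 : (16 : F) = 0 := by
    have := FiniteField.cast_card_eq_zero F
    rw [hF] at this
    norm_num at this
    exact_mod_cast this
  have h2 : (2 : F) = 0 := by
    have h24 : (2 : F) ^ 4 = 0 := by norm_num; linear_combination h16
    exact pow_eq_zero_iff (by norm_num) |>.mp h24
  -- basic facts about γ
  have h15 : γ ^ 15 = 1 := by rw [← hγ]; exact pow_orderOf_eq_one γ
  have hγ0 : γ ≠ 0 := by
    intro h
    rw [h] at h15
    norm_num at h15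
  have hmod : ∀ x : ℕ, γ ^ x = γ ^ (x % 15) := by
    intro x
    conv_lhs => rw [← Nat.div_add_mod x 15]
    rw [pow_add, pow_mul, h15, one_pow, one_mul]
  -- every nonzero element is a power of γ
  have hgen : ∀ x : F, x ≠ 0 → ∃ p : ℕ, p < 15 ∧ γ ^ p = x := by
    intro x hx
    set u : Fˣ := Units.mk0 γ hγ0 with hu_def
    have hu : orderOf u = 15 := by
      rw [← orderOf_units]
      simpa [hu_def] using hγ
    have hcardu : Fintype.card Fˣ = 15 := by rw [Fintype.card_units, hF]; norm_num
    have hbij : Function.Bijective (fun n : Fin 15 => u ^ (n : ℕ)) := by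
      rw [Fintype.bijective_iff_injective_and_card]
      refine ⟨fun a b hab => ?_, by simp [hcardu]⟩
      exact Fin.ext (pow_injOn_Iio_orderOf (by simp [hu, a.2]) (by simp [hu, b.2]) hab)
    obtain ⟨n, hn⟩ := hbij.2 (Units.mk0 x hx)
    refine ⟨n, n.2, ?_⟩
    have := congrArg Units.val hn
    simpa [hu_def] using this
  -- the three exponents and coefficients
  obtain ⟨i, j, k, hij, hik, hjk, hsupp⟩ := Finset.card_eq_three.mp hcard
  have ha : f.coeff i ≠ 0 := by rw [← Polynomial.mem_support_iff, hsupp]; simp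
  have hb : f.coeff j ≠ 0 := by rw [← Polynomial.mem_support_iff, hsupp]; simp
  have hc : f.coeff k ≠ 0 := by rw [← Polynomial.mem_support_iff, hsupp]; simp
  have heval : ∀ x : F, f.eval x = f.coeff i * x^i + f.coeff j * x^j + f.coeff k * x^k := by
    intro x
    rw [Polynomial.eval_eq_sum, Polynomial.sum_def, hsupp,
      Finset.sum_insert (by simp [hij, hik]), Finset.sum_insert (by simp [hjk]),
      Finset.sum_singleton]
    ring
  rw [heval] at hev1 hev6 hev10 hone
  rw [← pow_mul, ← pow_mul, ← pow_mul] at hev6 hev10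
  simp only [one_pow, mul_one] at hone
  -- normalize
  have hainv : f.coeff i * (f.coeff i)⁻¹ = 1 := mul_inv_cancel₀ ha
  obtain ⟨q, hq15, hqb⟩ := hgen (f.coeff j * (f.coeff i)⁻¹) (mul_ne_zero hb (inv_ne_zero ha))
  obtain ⟨r, hr15, hrc⟩ := hgen (f.coeff k * (f.coeff i)⁻¹) (mul_ne_zero hc (inv_ne_zero ha))
  have hi' : i % 15 < 15 := Nat.mod_lt _ (by norm_num)
  set i' := i % 15 with hi'def
  set m := (j % 15 + 15 - i') % 15 with hmdef
  set n := (k % 15 + 15 - i') % 15 with hndef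
  set z := 15 - i' with hzdef
  have step : ∀ s : ℕ,
      (f.coeff i * γ^(s*i) + f.coeff j * γ^(s*j) + f.coeff k * γ^(s*k) = 0) →
      γ^0 + γ^(q + (s*m)%15) + γ^(r + (s*n)%15) = 0 := by
    intro s hE
    have h0 : γ^(s*i) * γ^(s*z) = 1 := by
      have hiz : i + z = 15 * (i / 15 + 1) := by omega
      rw [← pow_add, ← Nat.mul_add, hiz,
        show s * (15 * (i/15+1)) = 15 * (s * (i/15+1)) by ring, pow_mul, h15, one_pow]
    have hjm : (j + z) % 15 = m % 15 := by omega
    have hkm : (k + z) % 15 = n % 15 := by omega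
    have hjx : γ^(s*j) * γ^(s*z) = γ^((s*m)%15) := by
      rw [← pow_add, ← Nat.mul_add, hmod (s*(j+z)), hmod ((s*m)%15)]
      congr 1
      have hmm : s*(j+z) % 15 = (s*m) % 15 := Nat.ModEq.mul_left s hjm
      omega
    have hkx : γ^(s*k) * γ^(s*z) = γ^((s*n)%15) := by
      rw [← pow_add, ← Nat.mul_add, hmod (s*(k+z)), hmod ((s*n)%15)]
      congr 1
      have hmm : s*(k+z) % 15 = (s*n) % 15 := Nat.ModEq.mul_left s hkm
      omega
    linear_combination ((f.coeff i)⁻¹ * γ^(s*z)) * hE - (f.coeff i * (f.coeff i)⁻¹) * h0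
      - (f.coeff j * (f.coeff i)⁻¹) * hjx - (f.coeff k * (f.coeff i)⁻¹) * hkx - hainv
      + γ^((s*m)%15) * hqb + γ^((s*n)%15) * hrc
  -- bridge to xor conditions
  have key : ∀ e1 e2 e3 : ℕ, (γ^e1 + γ^e2 + γ^e3 = 0) ↔ (pwN e1 ^^^ pwN e2 ^^^ pwN e3 = 0) := by
    have hphi : ∀ e : ℕ, γ^e = phi γ (pwN e) := by
      intro e
      have hlt : e % 15 < 15 := Nat.mod_lt _ (by norm_num)
      have hp : pwN (e % 15) = pwN e := by
        have : e % 15 % 15 = e % 15 := by omega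
        simp [pwN, this]
      rw [hmod e, phi_pw γ h2 hpoly _ hlt, hp]
    intro e1 e2 e3
    constructor
    · intro h
      rw [hphi e1, hphi e2, hphi e3, ← phi_xor γ h2, ← phi_xor γ h2] at h
      have hlt : pwN e1 ^^^ pwN e2 ^^^ pwN e3 < 16 := by
        have := Nat.xor_lt_two_pow (n := 4)
          (Nat.xor_lt_two_pow (n := 4) (pwN_lt e1) (pwN_lt e2)) (pwN_lt e3)
        exact this
      exact phi_eq_zero γ h2 hpoly _ hlt h
    · intro h
      rw [hphi e1, hphi e2, hphi e3, ← phi_xor γ h2, ← phi_xor γ h2, h]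
      norm_num [phi]
  -- conditions
  have X1 : 1 ^^^ pwN (q + (1*m)%15) ^^^ pwN (r + (1*n)%15) = 0 := by
    have := (key _ _ _).mp (step 1 (by simpa using hev1))
    rwa [show pwN 0 = 1 from rfl] at this
  have X6 : 1 ^^^ pwN (q + (6*m)%15) ^^^ pwN (r + (6*n)%15) = 0 := by
    have := (key _ _ _).mp (step 6 hev6)
    rwa [show pwN 0 = 1 from rfl] at this
  have X10 : 1 ^^^ pwN (q + (10*m)%15) ^^^ pwN (r + (10*n)%15) = 0 := by
    have := (key _ _ _).mp (step 10 hev10)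
    rwa [show pwN 0 = 1 from rfl] at this
  have XD : ¬ (1 ^^^ pwN q ^^^ pwN r = 0) := by
    intro hxor
    have hsum : γ^0 + γ^q + γ^r = 0 := by
      apply (key 0 q r).mpr
      rwa [show pwN 0 = 1 from rfl]
    have hval : γ^0 + γ^q + γ^r = (f.coeff i)⁻¹ := by
      rw [pow_zero, hqb, hrc]
      linear_combination (f.coeff i)⁻¹ * hone - hainv
    rw [hval] at hsum
    exact inv_ne_zero ha hsum
  exact pwN_core ⟨q, hq15⟩ ⟨r, hr15⟩ ⟨m, by omega⟩ ⟨n, by omega⟩ ⟨X1, X6, X10, XD⟩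
end

section
/- Let p, q be distinct primes, θ_p a primitive p-th root of unity and θ_q a primitive q-th root of unity in C. Suppose a : {1,…,p−1} → Z/pZ and b : {1,…,p−1} → Z/qZ satisfy ∑_{i=1}^{p−1} θ_p^{a(i)}·(θ_q^{b(i)} − 1) = 0, and a is injective with 0 not in the image of a. Then b(i) = 0 for all i ∈ {1,…,p−1}. -/
open Polynomial IntermediateField Module

set_option maxHeartbeats 1000000 in
lemma aux_mem_adjoin_mul (p q : ℕ) (hp : p.Prime) (hq : q.Prime) (hpq : p ≠ q)
    (θp θq : ℂ) (hθp : IsPrimitiveRoot θp p) (hθq : IsPrimitiveRoot θq q) :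
    θp ∈ ℚ⟮θp * θq⟯ := by
  haveI : Fact p.Prime := ⟨hp⟩
  have hq0 : (q : ZMod p) ≠ 0 := by
    rw [Ne, ZMod.natCast_eq_zero_iff]
    intro h
    exact hpq ((Nat.prime_dvd_prime_iff_eq hp hq).mp h)
  set e := ((q : ZMod p)⁻¹).val with hedef
  have hcast : ((q * e : ℕ) : ZMod p) = 1 := by
    push_cast
    rw [hedef, ZMod.natCast_val, ZMod.cast_id]
    exact mul_inv_cancel₀ hq0
  have hmod : (q * e) % p = 1 := by
    have h2 : (q * e) % p = 1 % p :=
      (ZMod.natCast_eq_natCast_iff (q * e) 1 p).mp (by rw [hcast]; simp)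
    rwa [Nat.mod_eq_of_lt hp.one_lt] at h2
  have hk : q * e = p * ((q * e) / p) + 1 := by
    conv_lhs => rw [← Nat.div_add_mod (q * e) p, hmod]
  have hpow : ((θp * θq) ^ q) ^ e = θp := by
    have h1 : (θp * θq) ^ q = θp ^ q := by rw [mul_pow, hθq.pow_eq_one, mul_one]
    rw [h1, ← pow_mul, hk, pow_add, pow_mul, hθp.pow_eq_one, one_pow, one_mul, pow_one]
  have hm := pow_mem (pow_mem (IntermediateField.mem_adjoin_simple_self ℚ (θp * θq)) q) e
  rwa [hpow] at hm

set_option maxHeartbeats 2000000 in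
theorem stmt_17 (p q : ℕ) (hp : p.Prime) (hq : q.Prime) (hpq : p ≠ q)
    (θp θq : ℂ) (hθp : IsPrimitiveRoot θp p) (hθq : IsPrimitiveRoot θq q)
    (a : ℕ → ZMod p) (b : ℕ → ZMod q)
    (hsum : ∑ i ∈ Finset.Icc 1 (p - 1), θp ^ (a i).val * (θq ^ (b i).val - 1) = 0)
    (hinj : Set.InjOn a (Set.Icc 1 (p - 1)))
    (h0 : ∀ i ∈ Finset.Icc 1 (p - 1), a i ≠ 0) :
    ∀ i ∈ Finset.Icc 1 (p - 1), b i = 0 := by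
  have hp1 : 1 < p := hp.one_lt
  have hq1 : 1 < q := hq.one_lt
  haveI : Fact p.Prime := ⟨hp⟩
  haveI : Fact q.Prime := ⟨hq⟩
  set K : IntermediateField ℚ ℂ := ℚ⟮θq⟯ with hKdef
  have hθq_int : IsIntegral ℚ θq := (hθq.isIntegral hq.pos).tower_top
  have hθp_int : IsIntegral K θp := ((hθp.isIntegral hp.pos).tower_top : IsIntegral K θp)
  have hfK : finrank ℚ K = q - 1 := by
    rw [hKdef, IntermediateField.adjoin.finrank hθq_int,
      ← Polynomial.cyclotomic_eq_minpoly_rat hθq hq.pos, Polynomial.natDegree_cyclotomic,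
      Nat.totient_prime hq]
  set L : IntermediateField K ℂ := K⟮θp⟯ with hLdef
  haveI : FiniteDimensional K L := IntermediateField.adjoin.finiteDimensional hθp_int
  haveI : FiniteDimensional ℚ K := IntermediateField.adjoin.finiteDimensional hθq_int
  set d : ℕ := (minpoly K θp).natDegree with hddef
  have hfL : finrank K L = d := IntermediateField.adjoin.finrank hθp_int
  -- ζ = θp * θq is a primitive pq-th root of unity
  have hcop : Nat.Coprime p q := (Nat.coprime_primes hp hq).mpr hpq
  have hζ : IsPrimitiveRoot (θp * θq) (p * q) := by
    have hop : orderOf θp = p := hθp.eq_orderOf.symm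
    have hoq : orderOf θq = q := hθq.eq_orderOf.symm
    have h := (Commute.all θp θq).orderOf_mul_eq_mul_orderOf_of_coprime
      (by rw [hop, hoq]; exact hcop)
    rw [hop, hoq] at h
    exact h ▸ IsPrimitiveRoot.orderOf (θp * θq)
  have hζ_int : IsIntegral ℚ (θp * θq) := (hζ.isIntegral (by positivity)).tower_top
  set M : IntermediateField ℚ ℂ := ℚ⟮θp * θq⟯ with hMdef
  have hfM : finrank ℚ M = (p - 1) * (q - 1) := by
    rw [hMdef, IntermediateField.adjoin.finrank hζ_int,
      ← Polynomial.cyclotomic_eq_minpoly_rat hζ (by positivity), Polynomial.natDegree_cyclotomic,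
      Nat.totient_mul hcop, Nat.totient_prime hp, Nat.totient_prime hq]
  have hθpM : θp ∈ M := aux_mem_adjoin_mul p q hp hq hpq θp θq hθp hθq
  have hθqM : θq ∈ M := by
    have h := aux_mem_adjoin_mul q p hq hp (Ne.symm hpq) θq θp hθq hθp
    rwa [mul_comm θq θp] at h
  have hθqK : θq ∈ K := IntermediateField.mem_adjoin_simple_self ℚ θq
  have hKM : K ≤ M := by
    rw [hKdef]
    exact IntermediateField.adjoin_simple_le_iff.mpr hθqM
  have hθpL : θp ∈ L := IntermediateField.mem_adjoin_simple_self K θp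
  have hθqL : θq ∈ L := by
    have h := L.algebraMap_mem ⟨θq, hθqK⟩
    rwa [IntermediateField.algebraMap_apply] at h
  have hLE : IntermediateField.extendScalars hKM = L := by
    apply le_antisymm
    · intro x hx
      have hxM : x ∈ M := hx
      have hMle : M ≤ L.restrictScalars ℚ := by
        rw [hMdef]
        exact IntermediateField.adjoin_simple_le_iff.mpr (mul_mem hθpL hθqL)
      exact hMle hxM
    · rw [hLdef]
      exact IntermediateField.adjoin_simple_le_iff.mpr hθpM
  have hd : d = p - 1 := by
    have h := IntermediateField.finrank_bot_mul_relfinrank hKM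
    rw [IntermediateField.relfinrank_eq_finrank_of_le hKM, hLE, hfK, hfM, hfL] at h
    have hq1' : 0 < q - 1 := by omega
    have h' : (q - 1) * d = (q - 1) * (p - 1) := by rw [h]; ring
    exact Nat.eq_of_mul_eq_mul_left hq1' h'
  -- linear independence of θp^1, ..., θp^(p-1) over K
  have hli0 : LinearIndependent K fun i : Fin (p - 1) => θp ^ (i : ℕ) := by
    have h := linearIndependent_pow (K := K) (S := ℂ) θp
    rw [← hddef, hd] at h
    exact h
  have hli1 : LinearIndependent K fun i : Fin (p - 1) => θp ^ ((i : ℕ) + 1) := by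
    have hmap : LinearIndependent K fun i : Fin (p - 1) =>
        (LinearMap.mulLeft K θp) (θp ^ (i : ℕ)) := by
      apply hli0.map' (LinearMap.mulLeft K θp)
      rw [LinearMap.ker_eq_bot]
      exact mul_right_injective₀ (hθp.ne_zero hp.pos.ne')
    convert hmap using 2 with i
    simp [LinearMap.mulLeft_apply, pow_succ, mul_comm]
  -- transfer to the family indexed by Icc 1 (p-1)
  have hval_lt : ∀ i : {x // x ∈ Finset.Icc 1 (p - 1)}, (a i.1).val - 1 < p - 1 := by
    intro i
    have h1 : (a i.1).val < p := ZMod.val_lt _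
    have h2 : (a i.1).val ≠ 0 := by
      intro h
      exact h0 i.1 i.2 ((ZMod.val_eq_zero _).mp h)
    omega
  set g : {x // x ∈ Finset.Icc 1 (p - 1)} → Fin (p - 1) :=
    fun i => ⟨(a i.1).val - 1, hval_lt i⟩ with hgdef
  have hginj : Function.Injective g := by
    intro i j hij
    have h1 : (a i.1).val - 1 = (a j.1).val - 1 := congrArg Fin.val hij
    have hi0 : (a i.1).val ≠ 0 := fun h => h0 i.1 i.2 ((ZMod.val_eq_zero _).mp h)
    have hj0 : (a j.1).val ≠ 0 := fun h => h0 j.1 j.2 ((ZMod.val_eq_zero _).mp h)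
    have hval : (a i.1).val = (a j.1).val := by omega
    have : a i.1 = a j.1 := ZMod.val_injective p hval
    exact Subtype.ext (hinj (Set.mem_Icc.mpr (Finset.mem_Icc.mp i.2)) (Set.mem_Icc.mpr (Finset.mem_Icc.mp j.2)) this)
  have hli2 : LinearIndependent K fun i : {x // x ∈ Finset.Icc 1 (p - 1)} =>
      θp ^ (a i.1).val := by
    have h := hli1.comp g hginj
    convert h using 2 with i
    simp only [Function.comp_apply, hgdef]
    congr 1
    have hi0 : (a i.1).val ≠ 0 := fun h => h0 i.1 i.2 ((ZMod.val_eq_zero _).mp h)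
    omega
  -- coefficients in K
  set c : {x // x ∈ Finset.Icc 1 (p - 1)} → K :=
    fun i => ⟨θq ^ (b i.1).val - 1, sub_mem (pow_mem hθqK _) (one_mem K)⟩ with hcdef
  have hsum' : ∑ i : {x // x ∈ Finset.Icc 1 (p - 1)}, c i • (θp ^ (a i.1).val : ℂ) = 0 := by
    have hterm : ∀ i : {x // x ∈ Finset.Icc 1 (p - 1)},
        c i • (θp ^ (a i.1).val : ℂ) = θp ^ (a i.1).val * (θq ^ (b i.1).val - 1) := by
      intro i
      rw [hcdef, Algebra.smul_def, IntermediateField.algebraMap_apply]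
      ring
    rw [Finset.sum_congr rfl (fun i _ => hterm i)]
    rw [← Finset.sum_attach (Finset.Icc 1 (p - 1))
      (fun i => θp ^ (a i).val * (θq ^ (b i).val - 1))] at hsum
    exact hsum
  have hc0 := Fintype.linearIndependent_iff.mp hli2 c hsum'
  intro i hi
  have hci := hc0 ⟨i, hi⟩
  rw [hcdef] at hci
  have heq : θq ^ (b i).val - 1 = 0 := congrArg Subtype.val hci
  have hpow : θq ^ (b i).val = 1 := by linear_combination heq
  have hdvd : q ∣ (b i).val := (IsPrimitiveRoot.pow_eq_one_iff_dvd hθq _).mp hpow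
  have hlt : (b i).val < q := ZMod.val_lt _
  have hv0 : (b i).val = 0 := Nat.eq_zero_of_dvd_of_lt hdvd hlt
  exact (ZMod.val_eq_zero _).mp hv0
end

section
/- In the field F_{2^{11}} = F_2[γ]/(γ^{11} + γ^2 + 1), where γ is a primitive 2047th root of unity (2047 = 23 × 89), the polynomial f(X) = γ^{1485}·X^{29} + γ^{694}·X^{27} + γ^{118} satisfies f(γ) = f(γ^{713}) = f(γ^{1335}) = 0 and f(1) = 1. -/
set_option maxHeartbeats 1000000 in
open Polynomial in
theorem stmt_18 (F : Type) [Field F] [Fintype F] (hF : Fintype.card F = 2 ^ 11)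
    (γ : F) (hpoly : γ ^ 11 + γ ^ 2 + 1 = 0) (hγ : orderOf γ = 2047)
    (f : Polynomial F)
    (hf : f = C (γ ^ 1485) * X ^ 29 + C (γ ^ 694) * X ^ 27 + C (γ ^ 118)) :
    f.eval γ = 0 ∧ f.eval (γ ^ 713) = 0 ∧ f.eval (γ ^ 1335) = 0 ∧ f.eval 1 = 1 := by
  have htwo : (2 : F) = 0 := by
    have h := FiniteField.cast_card_eq_zero F
    rw [hF] at h
    have h2 : (2 : F) ^ 11 = 0 := by exact_mod_cast h
    exact pow_eq_zero_iff (by norm_num) |>.mp h2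
  have h1 : γ ^ 2047 = 1 := by rw [← hγ]; exact pow_orderOf_eq_one γ
  have pw11 : γ ^ 11 = γ ^ 2 + 1 := by linear_combination (1) * hpoly + ((-1 : F) * γ ^ 2 + (-1 : F)) * htwo
  have pw22 : γ ^ 22 = γ ^ 4 + 1 := by linear_combination (γ ^ 11 + γ ^ 2 + 1) * pw11 + (0) * hpoly + ((1 : F) * γ ^ 2) * htwo
  have pw23 : γ ^ 23 = γ ^ 5 + γ := by linear_combination γ * pw22 + (0) * hpoly + ((0 : F)) * htwo
  have pw46 : γ ^ 46 = γ ^ 10 + γ ^ 2 := by linear_combination (γ ^ 23 + γ ^ 5 + γ) * pw23 + (0) * hpoly + ((1 : F) * γ ^ 6) * htwo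
  have pw47 : γ ^ 47 = γ ^ 3 + γ ^ 2 + 1 := by linear_combination γ * pw46 + (1) * hpoly + ((-1 : F) * γ ^ 2 + (-1 : F)) * htwo
  have pw94 : γ ^ 94 = γ ^ 6 + γ ^ 4 + 1 := by linear_combination (γ ^ 47 + γ ^ 3 + γ ^ 2 + 1) * pw47 + (0) * hpoly + ((1 : F) * γ ^ 5 + (1 : F) * γ ^ 3 + (1 : F) * γ ^ 2) * htwo
  have pw188 : γ ^ 188 = γ ^ 8 + γ ^ 3 + γ + 1 := by linear_combination (γ ^ 94 + γ ^ 6 + γ ^ 4 + 1) * pw94 + (γ) * hpoly + ((1 : F) * γ ^ 10 + (1 : F) * γ ^ 6 + (1 : F) * γ ^ 4 + (-1 : F) * γ ^ 3 + (-1 : F) * γ) * htwo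
  have pw189 : γ ^ 189 = γ ^ 9 + γ ^ 4 + γ ^ 2 + γ := by linear_combination γ * pw188 + (0) * hpoly + ((0 : F)) * htwo
  have pw378 : γ ^ 378 = γ ^ 9 + γ ^ 8 + γ ^ 7 + γ ^ 4 + γ ^ 2 := by linear_combination (γ ^ 189 + γ ^ 9 + γ ^ 4 + γ ^ 2 + γ) * pw189 + (γ ^ 7) * hpoly + ((1 : F) * γ ^ 13 + (1 : F) * γ ^ 11 + (1 : F) * γ ^ 10 + (-1 : F) * γ ^ 9 + (-1 : F) * γ ^ 7 + (1 : F) * γ ^ 6 + (1 : F) * γ ^ 5 + (1 : F) * γ ^ 3) * htwo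
  have pw756 : γ ^ 756 = γ ^ 9 + γ ^ 8 + γ ^ 4 + γ ^ 3 := by linear_combination (γ ^ 378 + γ ^ 9 + γ ^ 8 + γ ^ 7 + γ ^ 4 + γ ^ 2) * pw378 + (γ ^ 7 + γ ^ 5 + γ ^ 3) * hpoly + ((1 : F) * γ ^ 17 + (1 : F) * γ ^ 16 + (1 : F) * γ ^ 15 + (1 : F) * γ ^ 13 + (1 : F) * γ ^ 12 + (2 : F) * γ ^ 11 + (1 : F) * γ ^ 10 + (-1 : F) * γ ^ 7 + (1 : F) * γ ^ 6 + (-1 : F) * γ ^ 5 + (-1 : F) * γ ^ 3) * htwo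
  have pw757 : γ ^ 757 = γ ^ 10 + γ ^ 9 + γ ^ 5 + γ ^ 4 := by linear_combination γ * pw756 + (0) * hpoly + ((0 : F)) * htwo
  have pw1514 : γ ^ 1514 = γ ^ 10 + γ ^ 8 + γ ^ 7 + γ ^ 2 + 1 := by linear_combination (γ ^ 757 + γ ^ 10 + γ ^ 9 + γ ^ 5 + γ ^ 4) * pw757 + (γ ^ 9 + γ ^ 7 + 1) * hpoly + ((1 : F) * γ ^ 19 + (1 : F) * γ ^ 15 + (2 : F) * γ ^ 14 + (1 : F) * γ ^ 13 + (-1 : F) * γ ^ 11 + (-1 : F) * γ ^ 7 + (-1 : F) * γ ^ 2 + (-1 : F)) * htwo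
  have pw44 : γ ^ 44 = γ ^ 8 + 1 := by linear_combination (γ ^ 22 + γ ^ 4 + 1) * pw22 + (0) * hpoly + ((1 : F) * γ ^ 4) * htwo
  have pw45 : γ ^ 45 = γ ^ 9 + γ := by linear_combination γ * pw44 + (0) * hpoly + ((0 : F)) * htwo
  have pw90 : γ ^ 90 = γ ^ 9 + γ ^ 7 + γ ^ 2 := by linear_combination (γ ^ 45 + γ ^ 9 + γ) * pw45 + (γ ^ 7) * hpoly + ((1 : F) * γ ^ 10 + (-1 : F) * γ ^ 9 + (-1 : F) * γ ^ 7) * htwo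
  have pw180 : γ ^ 180 = γ ^ 9 + γ ^ 7 + γ ^ 5 + γ ^ 4 + γ ^ 3 := by linear_combination (γ ^ 90 + γ ^ 9 + γ ^ 7 + γ ^ 2) * pw90 + (γ ^ 7 + γ ^ 3) * hpoly + ((1 : F) * γ ^ 16 + (1 : F) * γ ^ 11 + (-1 : F) * γ ^ 7 + (-1 : F) * γ ^ 5 + (-1 : F) * γ ^ 3) * htwo
  have pw360 : γ ^ 360 = γ ^ 10 + γ ^ 9 + γ ^ 8 + γ ^ 7 + γ ^ 6 + γ ^ 5 + γ ^ 3 := by linear_combination (γ ^ 180 + γ ^ 9 + γ ^ 7 + γ ^ 5 + γ ^ 4 + γ ^ 3) * pw180 + (γ ^ 7 + γ ^ 3) * hpoly + ((1 : F) * γ ^ 16 + (1 : F) * γ ^ 14 + (1 : F) * γ ^ 13 + (2 : F) * γ ^ 12 + (1 : F) * γ ^ 11 + (1 : F) * γ ^ 10 + (1 : F) * γ ^ 8 + (-1 : F) * γ ^ 5 + (-1 : F) * γ ^ 3) * htwo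
  have pw720 : γ ^ 720 = γ ^ 10 + γ ^ 6 + γ ^ 2 + γ + 1 := by linear_combination (γ ^ 360 + γ ^ 10 + γ ^ 9 + γ ^ 8 + γ ^ 7 + γ ^ 6 + γ ^ 5 + γ ^ 3) * pw360 + (γ ^ 9 + γ ^ 7 + γ ^ 5 + γ ^ 3 + γ + 1) * hpoly + ((1 : F) * γ ^ 19 + (1 : F) * γ ^ 18 + (2 : F) * γ ^ 17 + (2 : F) * γ ^ 16 + (3 : F) * γ ^ 15 + (2 : F) * γ ^ 14 + (3 : F) * γ ^ 13 + (2 : F) * γ ^ 12 + (1 : F) * γ ^ 11 + (1 : F) * γ ^ 10 + (1 : F) * γ ^ 8 + (-1 : F) * γ ^ 7 + (-1 : F) * γ ^ 5 + (-1 : F) * γ ^ 3 + (-1 : F) * γ ^ 2 + (-1 : F) * γ + (-1 : F)) * htwo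
  have pw721 : γ ^ 721 = γ ^ 7 + γ ^ 3 + γ + 1 := by linear_combination γ * pw720 + (1) * hpoly + ((-1 : F)) * htwo
  have pw14 : γ ^ 14 = γ ^ 5 + γ ^ 3 := by linear_combination (γ ^ 3) * hpoly + ((-1 : F) * γ ^ 5 + (-1 : F) * γ ^ 3) * htwo
  have pw28 : γ ^ 28 = γ ^ 10 + γ ^ 6 := by linear_combination (γ ^ 14 + γ ^ 5 + γ ^ 3) * pw14 + (0) * hpoly + ((1 : F) * γ ^ 8) * htwo
  have pw29 : γ ^ 29 = γ ^ 7 + γ ^ 2 + 1 := by linear_combination γ * pw28 + (1) * hpoly + ((-1 : F) * γ ^ 2 + (-1 : F)) * htwo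
  have pw58 : γ ^ 58 = γ ^ 5 + γ ^ 4 + γ ^ 3 + 1 := by linear_combination (γ ^ 29 + γ ^ 7 + γ ^ 2 + 1) * pw29 + (γ ^ 3) * hpoly + ((1 : F) * γ ^ 9 + (1 : F) * γ ^ 7 + (-1 : F) * γ ^ 5 + (-1 : F) * γ ^ 3 + (1 : F) * γ ^ 2) * htwo
  have pw59 : γ ^ 59 = γ ^ 6 + γ ^ 5 + γ ^ 4 + γ := by linear_combination γ * pw58 + (0) * hpoly + ((0 : F)) * htwo
  have pw118 : γ ^ 118 = γ ^ 10 + γ ^ 8 + γ ^ 3 + γ ^ 2 + γ := by linear_combination (γ ^ 59 + γ ^ 6 + γ ^ 5 + γ ^ 4 + γ) * pw59 + (γ) * hpoly + ((1 : F) * γ ^ 11 + (1 : F) * γ ^ 10 + (1 : F) * γ ^ 9 + (1 : F) * γ ^ 7 + (1 : F) * γ ^ 6 + (1 : F) * γ ^ 5 + (-1 : F) * γ ^ 3 + (-1 : F) * γ) * htwo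
  have pw12 : γ ^ 12 = γ ^ 3 + γ := by linear_combination (γ) * hpoly + ((-1 : F) * γ ^ 3 + (-1 : F) * γ) * htwo
  have pw13 : γ ^ 13 = γ ^ 4 + γ ^ 2 := by linear_combination γ * pw12 + (0) * hpoly + ((0 : F)) * htwo
  have pw26 : γ ^ 26 = γ ^ 8 + γ ^ 4 := by linear_combination (γ ^ 13 + γ ^ 4 + γ ^ 2) * pw13 + (0) * hpoly + ((1 : F) * γ ^ 6) * htwo
  have pw52 : γ ^ 52 = γ ^ 8 + γ ^ 7 + γ ^ 5 := by linear_combination (γ ^ 26 + γ ^ 8 + γ ^ 4) * pw26 + (γ ^ 5) * hpoly + ((1 : F) * γ ^ 12 + (-1 : F) * γ ^ 7 + (-1 : F) * γ ^ 5) * htwo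
  have pw104 : γ ^ 104 = γ ^ 10 + γ ^ 7 + γ ^ 3 := by linear_combination (γ ^ 52 + γ ^ 8 + γ ^ 7 + γ ^ 5) * pw52 + (γ ^ 5 + γ ^ 3) * hpoly + ((1 : F) * γ ^ 15 + (1 : F) * γ ^ 13 + (1 : F) * γ ^ 12 + (-1 : F) * γ ^ 7 + (-1 : F) * γ ^ 5 + (-1 : F) * γ ^ 3) * htwo
  have pw105 : γ ^ 105 = γ ^ 8 + γ ^ 4 + γ ^ 2 + 1 := by linear_combination γ * pw104 + (1) * hpoly + ((-1 : F) * γ ^ 2 + (-1 : F)) * htwo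
  have pw210 : γ ^ 210 = γ ^ 8 + γ ^ 7 + γ ^ 5 + γ ^ 4 + 1 := by linear_combination (γ ^ 105 + γ ^ 8 + γ ^ 4 + γ ^ 2 + 1) * pw105 + (γ ^ 5) * hpoly + ((1 : F) * γ ^ 12 + (1 : F) * γ ^ 10 + (1 : F) * γ ^ 8 + (-1 : F) * γ ^ 7 + (1 : F) * γ ^ 6 + (-1 : F) * γ ^ 5 + (1 : F) * γ ^ 4 + (1 : F) * γ ^ 2) * htwo
  have pw211 : γ ^ 211 = γ ^ 9 + γ ^ 8 + γ ^ 6 + γ ^ 5 + γ := by linear_combination γ * pw210 + (0) * hpoly + ((0 : F)) * htwo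
  have pw422 : γ ^ 422 = γ ^ 10 + γ ^ 9 + γ ^ 5 + γ ^ 3 + γ ^ 2 + γ := by linear_combination (γ ^ 211 + γ ^ 9 + γ ^ 8 + γ ^ 6 + γ ^ 5 + γ) * pw211 + (γ ^ 7 + γ ^ 5 + γ) * hpoly + ((1 : F) * γ ^ 17 + (1 : F) * γ ^ 15 + (2 : F) * γ ^ 14 + (1 : F) * γ ^ 13 + (1 : F) * γ ^ 11 + (1 : F) * γ ^ 10 + (1 : F) * γ ^ 6 + (-1 : F) * γ ^ 5 + (-1 : F) * γ ^ 3 + (-1 : F) * γ) * htwo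
  have pw423 : γ ^ 423 = γ ^ 10 + γ ^ 6 + γ ^ 4 + γ ^ 3 + 1 := by linear_combination γ * pw422 + (1) * hpoly + ((-1 : F)) * htwo
  have pw846 : γ ^ 846 = γ ^ 9 + γ ^ 8 + γ ^ 6 + γ ^ 3 + γ ^ 2 + γ := by linear_combination (γ ^ 423 + γ ^ 10 + γ ^ 6 + γ ^ 4 + γ ^ 3 + 1) * pw423 + (γ ^ 9 + γ + 1) * hpoly + ((1 : F) * γ ^ 16 + (1 : F) * γ ^ 14 + (1 : F) * γ ^ 13 + (-1 : F) * γ ^ 11 + (2 : F) * γ ^ 10 + (1 : F) * γ ^ 7 + (1 : F) * γ ^ 6 + (1 : F) * γ ^ 4 + (-1 : F) * γ ^ 2 + (-1 : F) * γ) * htwo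
  have pw1692 : γ ^ 1692 = γ ^ 9 + γ ^ 6 + γ ^ 5 + γ ^ 4 + γ ^ 3 + γ ^ 2 + γ := by linear_combination (γ ^ 846 + γ ^ 9 + γ ^ 8 + γ ^ 6 + γ ^ 3 + γ ^ 2 + γ) * pw846 + (γ ^ 7 + γ ^ 5 + γ) * hpoly + ((1 : F) * γ ^ 17 + (1 : F) * γ ^ 15 + (1 : F) * γ ^ 14 + (1 : F) * γ ^ 12 + (2 : F) * γ ^ 11 + (2 : F) * γ ^ 10 + (1 : F) * γ ^ 9 + (1 : F) * γ ^ 8 + (1 : F) * γ ^ 4 + (-1 : F) * γ) * htwo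
  have pw95 : γ ^ 95 = γ ^ 7 + γ ^ 5 + γ := by linear_combination γ * pw94 + (0) * hpoly + ((0 : F)) * htwo
  have pw190 : γ ^ 190 = γ ^ 10 + γ ^ 5 + γ ^ 3 + γ ^ 2 := by linear_combination (γ ^ 95 + γ ^ 7 + γ ^ 5 + γ) * pw95 + (γ ^ 3) * hpoly + ((1 : F) * γ ^ 12 + (1 : F) * γ ^ 8 + (1 : F) * γ ^ 6 + (-1 : F) * γ ^ 5 + (-1 : F) * γ ^ 3) * htwo
  have pw380 : γ ^ 380 = γ ^ 10 + γ ^ 9 + γ ^ 6 + γ ^ 4 + γ ^ 2 + 1 := by linear_combination (γ ^ 190 + γ ^ 10 + γ ^ 5 + γ ^ 3 + γ ^ 2) * pw190 + (γ ^ 9 + 1) * hpoly + ((1 : F) * γ ^ 15 + (1 : F) * γ ^ 13 + (1 : F) * γ ^ 12 + (-1 : F) * γ ^ 11 + (-1 : F) * γ ^ 9 + (1 : F) * γ ^ 8 + (1 : F) * γ ^ 7 + (1 : F) * γ ^ 5 + (-1 : F) * γ ^ 2 + (-1 : F)) * htwo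
  have pw760 : γ ^ 760 = γ ^ 8 + γ ^ 7 + γ ^ 4 + γ ^ 3 + γ ^ 2 + γ := by linear_combination (γ ^ 380 + γ ^ 10 + γ ^ 9 + γ ^ 6 + γ ^ 4 + γ ^ 2 + 1) * pw380 + (γ ^ 9 + γ ^ 7 + γ + 1) * hpoly + ((1 : F) * γ ^ 19 + (1 : F) * γ ^ 16 + (1 : F) * γ ^ 15 + (1 : F) * γ ^ 14 + (1 : F) * γ ^ 13 + (1 : F) * γ ^ 12 + (2 : F) * γ ^ 10 + (1 : F) * γ ^ 8 + (-1 : F) * γ ^ 7 + (2 : F) * γ ^ 6 + (1 : F) * γ ^ 4 + (-1 : F) * γ ^ 3 + (-1 : F) * γ) * htwo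
  have pw761 : γ ^ 761 = γ ^ 9 + γ ^ 8 + γ ^ 5 + γ ^ 4 + γ ^ 3 + γ ^ 2 := by linear_combination γ * pw760 + (0) * hpoly + ((0 : F)) * htwo
  have pw1522 : γ ^ 1522 = γ ^ 10 + γ ^ 9 + γ ^ 8 + γ ^ 6 + γ ^ 5 + γ ^ 4 := by linear_combination (γ ^ 761 + γ ^ 9 + γ ^ 8 + γ ^ 5 + γ ^ 4 + γ ^ 3 + γ ^ 2) * pw761 + (γ ^ 7 + γ ^ 5) * hpoly + ((1 : F) * γ ^ 17 + (1 : F) * γ ^ 14 + (2 : F) * γ ^ 13 + (2 : F) * γ ^ 12 + (2 : F) * γ ^ 11 + (1 : F) * γ ^ 10 + (1 : F) * γ ^ 8 + (1 : F) * γ ^ 7 + (1 : F) * γ ^ 6) * htwo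
  have pw20 : γ ^ 20 = γ ^ 9 + γ ^ 2 + 1 := by linear_combination (γ ^ 9 + 1) * hpoly + ((-1 : F) * γ ^ 11 + (-1 : F) * γ ^ 9 + (-1 : F) * γ ^ 2 + (-1 : F)) * htwo
  have pw40 : γ ^ 40 = γ ^ 9 + γ ^ 7 + γ ^ 4 + 1 := by linear_combination (γ ^ 20 + γ ^ 9 + γ ^ 2 + 1) * pw20 + (γ ^ 7) * hpoly + ((1 : F) * γ ^ 11 + (-1 : F) * γ ^ 7 + (1 : F) * γ ^ 2) * htwo
  have pw80 : γ ^ 80 = γ ^ 9 + γ ^ 8 + γ ^ 7 + γ ^ 5 + γ ^ 3 + 1 := by linear_combination (γ ^ 40 + γ ^ 9 + γ ^ 7 + γ ^ 4 + 1) * pw40 + (γ ^ 7 + γ ^ 3) * hpoly + ((1 : F) * γ ^ 16 + (1 : F) * γ ^ 13 + (1 : F) * γ ^ 11 + (-1 : F) * γ ^ 5 + (1 : F) * γ ^ 4 + (-1 : F) * γ ^ 3) * htwo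
  have pw81 : γ ^ 81 = γ ^ 10 + γ ^ 9 + γ ^ 8 + γ ^ 6 + γ ^ 4 + γ := by linear_combination γ * pw80 + (0) * hpoly + ((0 : F)) * htwo
  have pw162 : γ ^ 162 = γ ^ 8 + γ ^ 5 + γ ^ 3 + γ + 1 := by linear_combination (γ ^ 81 + γ ^ 10 + γ ^ 9 + γ ^ 8 + γ ^ 6 + γ ^ 4 + γ) * pw81 + (γ ^ 9 + γ ^ 7 + γ ^ 5 + γ + 1) * hpoly + ((1 : F) * γ ^ 19 + (1 : F) * γ ^ 18 + (1 : F) * γ ^ 17 + (1 : F) * γ ^ 16 + (1 : F) * γ ^ 15 + (2 : F) * γ ^ 14 + (1 : F) * γ ^ 13 + (1 : F) * γ ^ 12 + (2 : F) * γ ^ 10 + (-1 : F) * γ ^ 3 + (-1 : F) * γ + (-1 : F)) * htwo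
  have pw163 : γ ^ 163 = γ ^ 9 + γ ^ 6 + γ ^ 4 + γ ^ 2 + γ := by linear_combination γ * pw162 + (0) * hpoly + ((0 : F)) * htwo
  have pw326 : γ ^ 326 = γ ^ 9 + γ ^ 8 + γ ^ 7 + γ ^ 4 + γ ^ 3 + γ ^ 2 + γ := by linear_combination (γ ^ 163 + γ ^ 9 + γ ^ 6 + γ ^ 4 + γ ^ 2 + γ) * pw163 + (γ ^ 7 + γ) * hpoly + ((1 : F) * γ ^ 15 + (1 : F) * γ ^ 13 + (1 : F) * γ ^ 11 + (2 : F) * γ ^ 10 + (-1 : F) * γ ^ 9 + (1 : F) * γ ^ 8 + (1 : F) * γ ^ 6 + (1 : F) * γ ^ 5 + (-1 : F) * γ) * htwo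
  have pw652 : γ ^ 652 = γ ^ 9 + γ ^ 8 + γ ^ 6 + γ ^ 4 + γ ^ 3 + γ ^ 2 := by linear_combination (γ ^ 326 + γ ^ 9 + γ ^ 8 + γ ^ 7 + γ ^ 4 + γ ^ 3 + γ ^ 2 + γ) * pw326 + (γ ^ 7 + γ ^ 5 + γ ^ 3) * hpoly + ((1 : F) * γ ^ 17 + (1 : F) * γ ^ 16 + (1 : F) * γ ^ 15 + (1 : F) * γ ^ 13 + (2 : F) * γ ^ 12 + (3 : F) * γ ^ 11 + (3 : F) * γ ^ 10 + (1 : F) * γ ^ 9 + (1 : F) * γ ^ 8 + (1 : F) * γ ^ 6 + (1 : F) * γ ^ 5 + (1 : F) * γ ^ 4) * htwo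
  have pw653 : γ ^ 653 = γ ^ 10 + γ ^ 9 + γ ^ 7 + γ ^ 5 + γ ^ 4 + γ ^ 3 := by linear_combination γ * pw652 + (0) * hpoly + ((0 : F)) * htwo
  have pw1306 : γ ^ 1306 = γ ^ 10 + γ ^ 8 + γ ^ 7 + γ ^ 6 + γ ^ 5 + γ ^ 3 + γ ^ 2 + 1 := by linear_combination (γ ^ 653 + γ ^ 10 + γ ^ 9 + γ ^ 7 + γ ^ 5 + γ ^ 4 + γ ^ 3) * pw653 + (γ ^ 9 + γ ^ 7 + γ ^ 3 + 1) * hpoly + ((1 : F) * γ ^ 19 + (1 : F) * γ ^ 17 + (1 : F) * γ ^ 16 + (1 : F) * γ ^ 15 + (2 : F) * γ ^ 14 + (2 : F) * γ ^ 13 + (2 : F) * γ ^ 12 + (1 : F) * γ ^ 10 + (1 : F) * γ ^ 8 + (-1 : F) * γ ^ 5 + (-1 : F) * γ ^ 3 + (-1 : F) * γ ^ 2 + (-1 : F)) * htwo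
  have pw1307 : γ ^ 1307 = γ ^ 9 + γ ^ 8 + γ ^ 7 + γ ^ 6 + γ ^ 4 + γ ^ 3 + γ ^ 2 + γ + 1 := by linear_combination γ * pw1306 + (1) * hpoly + ((-1 : F) * γ ^ 2 + (-1 : F)) * htwo
  have pw15 : γ ^ 15 = γ ^ 6 + γ ^ 4 := by linear_combination γ * pw14 + (0) * hpoly + ((0 : F)) * htwo
  have pw30 : γ ^ 30 = γ ^ 8 + γ ^ 3 + γ := by linear_combination (γ ^ 15 + γ ^ 6 + γ ^ 4) * pw15 + (γ) * hpoly + ((1 : F) * γ ^ 10 + (-1 : F) * γ ^ 3 + (-1 : F) * γ) * htwo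
  have pw60 : γ ^ 60 = γ ^ 7 + γ ^ 6 + γ ^ 5 + γ ^ 2 := by linear_combination (γ ^ 30 + γ ^ 8 + γ ^ 3 + γ) * pw30 + (γ ^ 5) * hpoly + ((1 : F) * γ ^ 11 + (1 : F) * γ ^ 9 + (-1 : F) * γ ^ 7 + (-1 : F) * γ ^ 5 + (1 : F) * γ ^ 4) * htwo
  have pw120 : γ ^ 120 = γ ^ 10 + γ ^ 5 + γ ^ 4 + γ := by linear_combination (γ ^ 60 + γ ^ 7 + γ ^ 6 + γ ^ 5 + γ ^ 2) * pw60 + (γ ^ 3 + γ) * hpoly + ((1 : F) * γ ^ 13 + (1 : F) * γ ^ 12 + (1 : F) * γ ^ 11 + (1 : F) * γ ^ 9 + (1 : F) * γ ^ 8 + (1 : F) * γ ^ 7 + (-1 : F) * γ ^ 5 + (-1 : F) * γ ^ 3 + (-1 : F) * γ) * htwo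
  have pw121 : γ ^ 121 = γ ^ 6 + γ ^ 5 + 1 := by linear_combination γ * pw120 + (1) * hpoly + ((-1 : F)) * htwo
  have pw242 : γ ^ 242 = γ ^ 10 + γ ^ 3 + γ + 1 := by linear_combination (γ ^ 121 + γ ^ 6 + γ ^ 5 + 1) * pw121 + (γ) * hpoly + ((1 : F) * γ ^ 11 + (1 : F) * γ ^ 6 + (1 : F) * γ ^ 5 + (-1 : F) * γ ^ 3 + (-1 : F) * γ) * htwo
  have pw484 : γ ^ 484 = γ ^ 9 + γ ^ 6 := by linear_combination (γ ^ 242 + γ ^ 10 + γ ^ 3 + γ + 1) * pw242 + (γ ^ 9 + 1) * hpoly + ((1 : F) * γ ^ 13 + (1 : F) * γ ^ 10 + (-1 : F) * γ ^ 9 + (1 : F) * γ ^ 4 + (1 : F) * γ ^ 3 + (1 : F) * γ) * htwo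
  have pw485 : γ ^ 485 = γ ^ 10 + γ ^ 7 := by linear_combination γ * pw484 + (0) * hpoly + ((0 : F)) * htwo
  have pw970 : γ ^ 970 = γ ^ 9 + γ ^ 5 + γ ^ 3 + γ ^ 2 + 1 := by linear_combination (γ ^ 485 + γ ^ 10 + γ ^ 7) * pw485 + (γ ^ 9 + γ ^ 3 + 1) * hpoly + ((1 : F) * γ ^ 17 + (-1 : F) * γ ^ 11 + (-1 : F) * γ ^ 9 + (-1 : F) * γ ^ 5 + (-1 : F) * γ ^ 3 + (-1 : F) * γ ^ 2 + (-1 : F)) * htwo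
  have pw1940 : γ ^ 1940 = γ ^ 10 + γ ^ 9 + γ ^ 7 + γ ^ 6 + γ ^ 4 + 1 := by linear_combination (γ ^ 970 + γ ^ 9 + γ ^ 5 + γ ^ 3 + γ ^ 2 + 1) * pw970 + (γ ^ 7) * hpoly + ((1 : F) * γ ^ 14 + (1 : F) * γ ^ 12 + (1 : F) * γ ^ 11 + (1 : F) * γ ^ 8 + (2 : F) * γ ^ 5 + (1 : F) * γ ^ 3 + (1 : F) * γ ^ 2) * htwo
  have pw92 : γ ^ 92 = γ ^ 9 + γ ^ 4 + γ ^ 2 + 1 := by linear_combination (γ ^ 46 + γ ^ 10 + γ ^ 2) * pw46 + (γ ^ 9 + 1) * hpoly + ((1 : F) * γ ^ 12 + (-1 : F) * γ ^ 11 + (-1 : F) * γ ^ 9 + (-1 : F) * γ ^ 2 + (-1 : F)) * htwo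
  have pw184 : γ ^ 184 = γ ^ 9 + γ ^ 8 + γ ^ 7 + γ ^ 4 + 1 := by linear_combination (γ ^ 92 + γ ^ 9 + γ ^ 4 + γ ^ 2 + 1) * pw92 + (γ ^ 7) * hpoly + ((1 : F) * γ ^ 13 + (1 : F) * γ ^ 11 + (-1 : F) * γ ^ 7 + (1 : F) * γ ^ 6 + (1 : F) * γ ^ 4 + (1 : F) * γ ^ 2) * htwo
  have pw185 : γ ^ 185 = γ ^ 10 + γ ^ 9 + γ ^ 8 + γ ^ 5 + γ := by linear_combination γ * pw184 + (0) * hpoly + ((0 : F)) * htwo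
  have pw370 : γ ^ 370 = γ ^ 10 + γ ^ 5 + 1 := by linear_combination (γ ^ 185 + γ ^ 10 + γ ^ 9 + γ ^ 8 + γ ^ 5 + γ) * pw185 + (γ ^ 9 + γ ^ 7 + γ ^ 5 + 1) * hpoly + ((1 : F) * γ ^ 19 + (1 : F) * γ ^ 18 + (1 : F) * γ ^ 17 + (1 : F) * γ ^ 15 + (1 : F) * γ ^ 14 + (1 : F) * γ ^ 13 + (1 : F) * γ ^ 10 + (-1 : F) * γ ^ 7 + (1 : F) * γ ^ 6 + (-1 : F) * γ ^ 5 + (-1 : F)) * htwo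
  have pw371 : γ ^ 371 = γ ^ 6 + γ ^ 2 + γ + 1 := by linear_combination γ * pw370 + (1) * hpoly + ((-1 : F) * γ ^ 2 + (-1 : F)) * htwo
  have pw742 : γ ^ 742 = γ ^ 4 + γ ^ 3 + γ ^ 2 + γ + 1 := by linear_combination (γ ^ 371 + γ ^ 6 + γ ^ 2 + γ + 1) * pw371 + (γ) * hpoly + ((1 : F) * γ ^ 8 + (1 : F) * γ ^ 7 + (1 : F) * γ ^ 6 + (1 : F) * γ ^ 2) * htwo
  have pw1484 : γ ^ 1484 = γ ^ 8 + γ ^ 6 + γ ^ 4 + γ ^ 2 + 1 := by linear_combination (γ ^ 742 + γ ^ 4 + γ ^ 3 + γ ^ 2 + γ + 1) * pw742 + (0) * hpoly + ((1 : F) * γ ^ 7 + (1 : F) * γ ^ 6 + (2 : F) * γ ^ 5 + (2 : F) * γ ^ 4 + (2 : F) * γ ^ 3 + (1 : F) * γ ^ 2 + (1 : F) * γ) * htwo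
  have pw1485 : γ ^ 1485 = γ ^ 9 + γ ^ 7 + γ ^ 5 + γ ^ 3 + γ := by linear_combination γ * pw1484 + (0) * hpoly + ((0 : F)) * htwo
  have pw21 : γ ^ 21 = γ ^ 10 + γ ^ 3 + γ := by linear_combination γ * pw20 + (0) * hpoly + ((0 : F)) * htwo
  have pw42 : γ ^ 42 = γ ^ 9 + γ ^ 6 + 1 := by linear_combination (γ ^ 21 + γ ^ 10 + γ ^ 3 + γ) * pw21 + (γ ^ 9 + 1) * hpoly + ((1 : F) * γ ^ 13 + (-1 : F) * γ ^ 9 + (1 : F) * γ ^ 4 + (-1 : F)) * htwo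
  have pw43 : γ ^ 43 = γ ^ 10 + γ ^ 7 + γ := by linear_combination γ * pw42 + (0) * hpoly + ((0 : F)) * htwo
  have pw86 : γ ^ 86 = γ ^ 9 + γ ^ 5 + γ ^ 3 + 1 := by linear_combination (γ ^ 43 + γ ^ 10 + γ ^ 7 + γ) * pw43 + (γ ^ 9 + γ ^ 3 + 1) * hpoly + ((1 : F) * γ ^ 17 + (-1 : F) * γ ^ 9 + (1 : F) * γ ^ 8 + (-1 : F) * γ ^ 5 + (-1 : F) * γ ^ 3 + (-1 : F)) * htwo
  have pw172 : γ ^ 172 = γ ^ 10 + γ ^ 9 + γ ^ 7 + γ ^ 6 + 1 := by linear_combination (γ ^ 86 + γ ^ 9 + γ ^ 5 + γ ^ 3 + 1) * pw86 + (γ ^ 7) * hpoly + ((1 : F) * γ ^ 14 + (1 : F) * γ ^ 12 + (1 : F) * γ ^ 8 + (-1 : F) * γ ^ 7 + (1 : F) * γ ^ 5 + (1 : F) * γ ^ 3) * htwo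
  have pw173 : γ ^ 173 = γ ^ 10 + γ ^ 8 + γ ^ 7 + γ ^ 2 + γ + 1 := by linear_combination γ * pw172 + (1) * hpoly + ((-1 : F) * γ ^ 2 + (-1 : F)) * htwo
  have pw346 : γ ^ 346 = γ ^ 9 + γ ^ 7 + γ ^ 4 + γ ^ 3 := by linear_combination (γ ^ 173 + γ ^ 10 + γ ^ 8 + γ ^ 7 + γ ^ 2 + γ + 1) * pw173 + (γ ^ 9 + γ ^ 5 + γ ^ 3 + 1) * hpoly + ((1 : F) * γ ^ 18 + (1 : F) * γ ^ 17 + (1 : F) * γ ^ 15 + (1 : F) * γ ^ 12 + (2 : F) * γ ^ 10 + (1 : F) * γ ^ 9 + (2 : F) * γ ^ 8 + (-1 : F) * γ ^ 5 + (1 : F) * γ ^ 2 + (1 : F) * γ) * htwo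
  have pw347 : γ ^ 347 = γ ^ 10 + γ ^ 8 + γ ^ 5 + γ ^ 4 := by linear_combination γ * pw346 + (0) * hpoly + ((0 : F)) * htwo
  have pw694 : γ ^ 694 = γ ^ 10 + γ ^ 9 + γ ^ 8 + γ ^ 7 + γ ^ 5 + γ ^ 2 + 1 := by linear_combination (γ ^ 347 + γ ^ 10 + γ ^ 8 + γ ^ 5 + γ ^ 4) * pw347 + (γ ^ 9 + γ ^ 5 + 1) * hpoly + ((1 : F) * γ ^ 18 + (1 : F) * γ ^ 15 + (1 : F) * γ ^ 14 + (1 : F) * γ ^ 13 + (1 : F) * γ ^ 12 + (-1 : F) * γ ^ 11 + (-1 : F) * γ ^ 7 + (-1 : F) * γ ^ 5 + (-1 : F) * γ ^ 2 + (-1 : F)) * htwo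
  subst hf
  simp only [eval_add, eval_mul, eval_pow, eval_C, eval_X, eval_one, one_pow, mul_one]
  refine ⟨?_, ?_, ?_, ?_⟩
  · have ha : γ ^ 1485 * γ ^ 29 = γ ^ 1514 := by ring
    have hb : γ ^ 694 * γ ^ 27 = γ ^ 721 := by ring
    rw [ha, hb]
    rw [pw1514, pw721, pw118]; linear_combination ((1 : F) * γ ^ 10 + (1 : F) * γ ^ 8 + (1 : F) * γ ^ 7 + (1 : F) * γ ^ 3 + (1 : F) * γ ^ 2 + (1 : F) * γ + (1 : F)) * htwo
  · have ha : γ ^ 1485 * (γ ^ 713) ^ 29 = γ ^ 1692 := by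
      have h : γ ^ 1485 * (γ ^ 713) ^ 29 = (γ ^ 2047) ^ 10 * γ ^ 1692 := by ring
      rw [h, h1, one_pow, one_mul]
    have hb : γ ^ 694 * (γ ^ 713) ^ 27 = γ ^ 1522 := by
      have h : γ ^ 694 * (γ ^ 713) ^ 27 = (γ ^ 2047) ^ 9 * γ ^ 1522 := by ring
      rw [h, h1, one_pow, one_mul]
    rw [ha, hb]
    rw [pw1692, pw1522, pw118]; linear_combination ((1 : F) * γ ^ 10 + (1 : F) * γ ^ 9 + (1 : F) * γ ^ 8 + (1 : F) * γ ^ 6 + (1 : F) * γ ^ 5 + (1 : F) * γ ^ 4 + (1 : F) * γ ^ 3 + (1 : F) * γ ^ 2 + (1 : F) * γ) * htwo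
  · have ha : γ ^ 1485 * (γ ^ 1335) ^ 29 = γ ^ 1307 := by
      have h : γ ^ 1485 * (γ ^ 1335) ^ 29 = (γ ^ 2047) ^ 19 * γ ^ 1307 := by ring
      rw [h, h1, one_pow, one_mul]
    have hb : γ ^ 694 * (γ ^ 1335) ^ 27 = γ ^ 1940 := by
      have h : γ ^ 694 * (γ ^ 1335) ^ 27 = (γ ^ 2047) ^ 17 * γ ^ 1940 := by ring
      rw [h, h1, one_pow, one_mul]
    rw [ha, hb]
    rw [pw1307, pw1940, pw118]; linear_combination ((1 : F) * γ ^ 10 + (1 : F) * γ ^ 9 + (1 : F) * γ ^ 8 + (1 : F) * γ ^ 7 + (1 : F) * γ ^ 6 + (1 : F) * γ ^ 4 + (1 : F) * γ ^ 3 + (1 : F) * γ ^ 2 + (1 : F) * γ + (1 : F)) * htwo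
  · rw [pw1485, pw694, pw118]; linear_combination ((1 : F) * γ ^ 10 + (1 : F) * γ ^ 9 + (1 : F) * γ ^ 8 + (1 : F) * γ ^ 7 + (1 : F) * γ ^ 5 + (1 : F) * γ ^ 3 + (1 : F) * γ ^ 2 + (1 : F) * γ) * htwo
end
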